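/- arXiv:math/0505171 — 3 statements merged into one kernel-verified Lean document; each statement's English description precedes it below -/
import Mathlib

section
/- Under the hypotheses of the previous lemma, for 0 ≤ s ≤ log(m)/(2(κ ∨ 1)) with κ = k·2^k, one has Φ(m) e^{-3s/(2L(m))} ≤ Φ(m e^{-s}) ≤ Φ(m) e^{-s/(2L(m))}. -/
open Real

private lemma claimA (k : ℝ) (hk : 0 < k) :
    k ≤ Real.log 2 * (2 * max (k * (2:ℝ) ^ k) 1 - 1) := by
  have hl1 : (0.6931471803 : ℝ) < Real.log 2 := Real.log_two_gt_d9
  have hl2 : Real.log 2 < 0.6931471808 := Real.log_two_lt_d9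
  rcases le_or_gt k (Real.log 2) with h | h
  · have hM : (1:ℝ) ≤ max (k * (2:ℝ) ^ k) 1 := le_max_right _ _
    nlinarith
  · have h2k : 1 + k * Real.log 2 ≤ (2:ℝ) ^ k := by
      rw [Real.rpow_def_of_pos (by norm_num : (0:ℝ) < 2)]
      have := Real.add_one_le_exp (Real.log 2 * k)
      nlinarith
    have hM : k * (2:ℝ) ^ k ≤ max (k * (2:ℝ) ^ k) 1 := le_max_left _ _
    have hlp : (0:ℝ) < Real.log 2 := by linarith
    have hl48 : (0.48:ℝ) ≤ Real.log 2 * Real.log 2 := by nlinarith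
    have hll : 1 + Real.log 2 * Real.log 2 ≤ (2:ℝ) ^ k := by
      nlinarith [mul_pos hlp (sub_pos.mpr h)]
    have hM3 : 1.48 * k ≤ max (k * (2:ℝ) ^ k) 1 := by
      nlinarith [mul_nonneg (sub_nonneg.mpr hl48) hk.le,
        mul_le_mul_of_nonneg_left hll hk.le]
    nlinarith [mul_nonneg (sub_nonneg.mpr hM3) hlp.le,
      mul_nonneg (show (0:ℝ) ≤ Real.log 2 - 0.6931471803 by linarith) hk.le]

private lemma monoOn_aux (f f' : ℝ → ℝ) (a m : ℝ)
    (hd : ∀ z ∈ Set.Icc a m, HasDerivAt f (f' z) z)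
    (h0 : ∀ z ∈ Set.Ioo a m, 0 ≤ f' z) : MonotoneOn f (Set.Icc a m) := by
  apply monotoneOn_of_deriv_nonneg (convex_Icc a m)
  · exact fun z hz => (hd z hz).continuousAt.continuousWithinAt
  · intro z hz
    rw [interior_Icc] at hz
    exact ((hd z (Set.mem_Icc_of_Ioo hz)).differentiableAt).differentiableWithinAt
  · intro z hz
    rw [interior_Icc] at hz
    rw [(hd z (Set.mem_Icc_of_Ioo hz)).deriv]
    exact h0 z hz

set_option maxHeartbeats 1000000 in
/-- Corollary (ADB-cross): with Φ(m) = Φ(1) exp(∫₁^m dz/(z L(z))) and A2, for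
0 ≤ s ≤ log(m)/(2(κ∨1)), κ = k·2^k:
Φ(m) e^{-3s/(2L(m))} ≤ Φ(m e^{-s}) ≤ Φ(m) e^{-s/(2L(m))}. -/
theorem stmt_7 (L L' Φ : ℝ → ℝ) (k : ℝ) (hk : 0 < k)
    (hderiv : ∀ z ≥ (1:ℝ), HasDerivAt L (L' z) z)
    (hpos : ∀ z ≥ (1:ℝ), 0 < L z)
    (hA2 : ∀ z > (1:ℝ), |z * L' z| / L z < k / Real.log z)
    (hΦ1 : 0 < Φ 1)
    (hΦ : ∀ m ≥ (1:ℝ), Φ m = Φ 1 * Real.exp (∫ z in (1:ℝ)..m, 1 / (z * L z)))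
    (m s : ℝ) (hm : 1 ≤ m) (hs0 : 0 ≤ s)
    (hs : s ≤ Real.log m / (2 * max (k * (2:ℝ) ^ k) 1)) :
    Φ m * Real.exp (-(3 * s) / (2 * L m)) ≤ Φ (m * Real.exp (-s)) ∧
      Φ (m * Real.exp (-s)) ≤ Φ m * Real.exp (-s / (2 * L m)) := by
  rcases eq_or_lt_of_le hs0 with hs0' | hspos
  · rw [← hs0']
    norm_num
  -- setup
  set ℓ := Real.log m with hℓdef
  set M := max (k * (2:ℝ) ^ k) 1 with hMdef
  have hM1 : (1:ℝ) ≤ M := le_max_right _ _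
  have hm0 : (0:ℝ) < m := lt_of_lt_of_le one_pos hm
  have hLm : 0 < L m := hpos m hm
  have hℓs2 : 2 * M * s ≤ ℓ := by
    have h := (le_div_iff₀ (by linarith : (0:ℝ) < 2 * M)).mp hs
    linarith
  have hsℓ : s < ℓ := by nlinarith
  have hℓpos : 0 < ℓ := lt_trans hspos hsℓ
  have hℓs' : 0 < ℓ - s := by linarith
  set a := m * Real.exp (-s) with hadef
  have hae : a = Real.exp (ℓ - s) := by
    rw [hadef, Real.exp_sub, hℓdef, Real.exp_log hm0, Real.exp_neg, ← div_eq_mul_inv]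
  have ha1 : 1 < a := by
    rw [hae]
    calc (1:ℝ) = Real.exp 0 := by simp
    _ < Real.exp (ℓ - s) := Real.exp_lt_exp.mpr (by linarith)
  have ham : a ≤ m := by
    have h1 : Real.exp (-s) ≤ 1 := by
      calc Real.exp (-s) ≤ Real.exp 0 := Real.exp_le_exp.mpr (by linarith)
      _ = 1 := Real.exp_zero
    nlinarith
  have hloga : Real.log a = ℓ - s := by rw [hae, Real.log_exp]
  have hlog2pos : (0:ℝ) < Real.log 2 := Real.log_pos (by norm_num)
  -- the key constant bound
  have hc0 : 0 ≤ k * Real.log (ℓ / (ℓ - s)) := by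
    apply mul_nonneg hk.le
    apply Real.log_nonneg
    rw [le_div_iff₀ hℓs']
    linarith
  have hc2 : k * Real.log (ℓ / (ℓ - s)) ≤ Real.log 2 := by
    have hA := claimA k hk
    rw [← hMdef] at hA
    have h3 : k * s ≤ Real.log 2 * (ℓ - s) := by nlinarith
    have h1 : Real.log (ℓ / (ℓ - s)) ≤ s / (ℓ - s) := by
      have := Real.log_le_sub_one_of_pos (show (0:ℝ) < ℓ / (ℓ - s) by positivity)
      have h2 : ℓ / (ℓ - s) - 1 = s / (ℓ - s) := by field_simp; ring
      linarith
    calc k * Real.log (ℓ / (ℓ - s)) ≤ k * (s / (ℓ - s)) :=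
          mul_le_mul_of_nonneg_left h1 hk.le
    _ ≤ Real.log 2 := by
          rw [← mul_div_assoc, div_le_iff₀ hℓs']
          linarith
  -- pointwise chord bound
  have hchord : ∀ z ∈ Set.Icc a m,
      Real.exp (k * (Real.log ℓ - Real.log (Real.log z))) ≤ 1 + (ℓ - Real.log z) / s ∧
      1 - (ℓ - Real.log z) / s ≤
        Real.exp (-(k * (Real.log ℓ - Real.log (Real.log z)))) := by
    rintro z ⟨hz1, hz2⟩
    have hz0 : (0:ℝ) < z := by linarith
    have hlogz_lb : ℓ - s ≤ Real.log z := by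
      rw [← hloga]; exact Real.log_le_log (by linarith) hz1
    have hlogz_ub : Real.log z ≤ ℓ := Real.log_le_log hz0 hz2
    have hlogzpos : 0 < Real.log z := by linarith
    set θ := (ℓ - Real.log z) / s with hθdef
    have hθ0 : 0 ≤ θ := div_nonneg (by linarith) hspos.le
    have hθ1 : θ ≤ 1 := by
      rw [hθdef, div_le_one hspos]; linarith
    have hts : θ * s = ℓ - Real.log z := by
      rw [hθdef]; field_simp
    have hcomb : Real.log z = θ * (ℓ - s) + (1 - θ) * ℓ := by
      linear_combination hts
    have hconc : θ * Real.log (ℓ - s) + (1 - θ) * Real.log ℓ ≤ Real.log (Real.log z) := by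
      have h := (strictConcaveOn_log_Ioi.concaveOn).2 (Set.mem_Ioi.mpr hℓs')
        (Set.mem_Ioi.mpr hℓpos) hθ0 (show (0:ℝ) ≤ 1 - θ by linarith)
        (show θ + (1 - θ) = 1 by ring)
      rw [smul_eq_mul, smul_eq_mul, smul_eq_mul, smul_eq_mul] at h
      rw [hcomb]
      exact h
    set c := k * Real.log (ℓ / (ℓ - s)) with hcdef
    have hUθ : k * (Real.log ℓ - Real.log (Real.log z)) ≤ θ * c := by
      rw [hcdef, Real.log_div hℓpos.ne' hℓs'.ne']
      nlinarith
    have hU0 : 0 ≤ k * (Real.log ℓ - Real.log (Real.log z)) := by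
      have := Real.log_le_log hlogzpos hlogz_ub
      nlinarith
    have hexpc : Real.exp c ≤ 2 := by
      calc Real.exp c ≤ Real.exp (Real.log 2) := Real.exp_le_exp.mpr hc2
      _ = 2 := Real.exp_log (by norm_num)
    have hexpchord : Real.exp (θ * c) ≤ 1 - θ + θ * Real.exp c := by
      have h := convexOn_exp.2 (Set.mem_univ (0:ℝ)) (Set.mem_univ c)
        (by linarith : (0:ℝ) ≤ 1 - θ) hθ0 (by ring)
      rw [smul_eq_mul, smul_eq_mul, smul_eq_mul, smul_eq_mul, mul_zero, zero_add,
        Real.exp_zero, mul_one] at h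
      exact h
    have hup : Real.exp (k * (Real.log ℓ - Real.log (Real.log z))) ≤ 1 + θ := by
      calc Real.exp (k * (Real.log ℓ - Real.log (Real.log z)))
          ≤ Real.exp (θ * c) := Real.exp_le_exp.mpr hUθ
      _ ≤ 1 - θ + θ * Real.exp c := hexpchord
      _ ≤ 1 + θ := by nlinarith
    refine ⟨hup, ?_⟩
    have hexppos := Real.exp_pos (k * (Real.log ℓ - Real.log (Real.log z)))
    have h2 : (1 - θ) * Real.exp (k * (Real.log ℓ - Real.log (Real.log z))) ≤ 1 := by
      nlinarith
    calc 1 - θ = ((1 - θ) * Real.exp (k * (Real.log ℓ - Real.log (Real.log z)))) *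
          (Real.exp (k * (Real.log ℓ - Real.log (Real.log z))))⁻¹ := by
            field_simp
    _ ≤ 1 * (Real.exp (k * (Real.log ℓ - Real.log (Real.log z))))⁻¹ :=
          mul_le_mul_of_nonneg_right h2 (inv_nonneg.mpr hexppos.le)
    _ = Real.exp (-(k * (Real.log ℓ - Real.log (Real.log z)))) := by
          rw [one_mul, Real.exp_neg]
  -- monotonicity: |log L z - log L m| ≤ k (log ℓ - log log z)
  have hderivs : ∀ z ∈ Set.Icc a m,
      HasDerivAt (fun z => Real.log (Real.log z)) (z⁻¹ / Real.log z) z ∧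
      HasDerivAt (fun z => Real.log (L z)) (L' z / L z) z ∧
      L' z / L z ≤ k * (z⁻¹ / Real.log z) ∧
      -(L' z / L z) ≤ k * (z⁻¹ / Real.log z) := by
    rintro z ⟨hz1, hz2⟩
    have hz1' : (1:ℝ) < z := lt_of_lt_of_le ha1 hz1
    have hz0 : (0:ℝ) < z := by linarith
    have hlz : 0 < Real.log z := Real.log_pos hz1'
    have hLz : 0 < L z := hpos z hz1'.le
    have h := hA2 z hz1'
    rw [abs_mul, abs_of_pos hz0] at h
    have hcore : |L' z| * (z * Real.log z) ≤ k * L z := by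
      have h3 : z * |L' z| * Real.log z < k * L z := (div_lt_div_iff₀ hLz hlz).mp h
      nlinarith
    have hke : k * (z⁻¹ / Real.log z) = k / (z * Real.log z) := by
      field_simp
    have hzl' : (0:ℝ) < z * Real.log z := by positivity
    refine ⟨(Real.hasDerivAt_log hz0.ne').log hlz.ne',
      (hderiv z hz1'.le).log hLz.ne', ?_, ?_⟩
    · rw [hke, div_le_div_iff₀ hLz hzl']
      calc L' z * (z * Real.log z) ≤ |L' z| * (z * Real.log z) :=
            mul_le_mul_of_nonneg_right (le_abs_self _) hzl'.le
      _ ≤ k * L z := hcore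
    · rw [hke, ← neg_div, div_le_div_iff₀ hLz hzl']
      calc -L' z * (z * Real.log z) ≤ |L' z| * (z * Real.log z) :=
            mul_le_mul_of_nonneg_right (neg_le_abs _) hzl'.le
      _ ≤ k * L z := hcore
  have hφ : MonotoneOn (fun z => k * Real.log (Real.log z) - Real.log (L z))
      (Set.Icc a m) := by
    apply monoOn_aux _ (fun z => k * (z⁻¹ / Real.log z) - L' z / L z)
    · intro z hz
      obtain ⟨h1, h2, _, _⟩ := hderivs z hz
      exact (h1.const_mul k).sub h2
    · intro z hz
      obtain ⟨_, _, h3, _⟩ := hderivs z (Set.mem_Icc_of_Ioo hz)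
      linarith
  have hψ : MonotoneOn (fun z => k * Real.log (Real.log z) + Real.log (L z))
      (Set.Icc a m) := by
    apply monoOn_aux _ (fun z => k * (z⁻¹ / Real.log z) + L' z / L z)
    · intro z hz
      obtain ⟨h1, h2, _, _⟩ := hderivs z hz
      exact (h1.const_mul k).add h2
    · intro z hz
      obtain ⟨_, _, _, h4⟩ := hderivs z (Set.mem_Icc_of_Ioo hz)
      linarith
  have hmem_m : m ∈ Set.Icc a m := ⟨ham, le_refl m⟩
  -- pointwise integrand bounds
  have hpt : ∀ z ∈ Set.Icc a m,
      1 / L m * (1 / z) - 1 / (L m * s) * ((ℓ - Real.log z) * (1 / z)) ≤ 1 / (z * L z) ∧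
      1 / (z * L z) ≤ 1 / L m * (1 / z) + 1 / (L m * s) * ((ℓ - Real.log z) * (1 / z)) := by
    intro z hz
    have hz1' : (1:ℝ) < z := lt_of_lt_of_le ha1 hz.1
    have hz0 : (0:ℝ) < z := by linarith
    have hLz : 0 < L z := hpos z hz1'.le
    obtain ⟨hcu, hcl⟩ := hchord z hz
    have h1 := hφ hz hmem_m hz.2
    have h2 := hψ hz hmem_m hz.2
    simp only at h1 h2
    -- h1 : k log log z - log L z ≤ k log ℓ - log L m  (note log m = ℓ)
    have hub : L z ≤ L m * Real.exp (k * (Real.log ℓ - Real.log (Real.log z))) := by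
      have : Real.log (L z) ≤ Real.log (L m) + k * (Real.log ℓ - Real.log (Real.log z)) := by
        linarith
      calc L z = Real.exp (Real.log (L z)) := (Real.exp_log hLz).symm
      _ ≤ Real.exp (Real.log (L m) + k * (Real.log ℓ - Real.log (Real.log z))) :=
            Real.exp_le_exp.mpr this
      _ = L m * Real.exp (k * (Real.log ℓ - Real.log (Real.log z))) := by
            rw [Real.exp_add, Real.exp_log hLm]
    have hlb : L m * Real.exp (-(k * (Real.log ℓ - Real.log (Real.log z)))) ≤ L z := by
      have : Real.log (L m) - k * (Real.log ℓ - Real.log (Real.log z)) ≤ Real.log (L z) := by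
        linarith
      calc L m * Real.exp (-(k * (Real.log ℓ - Real.log (Real.log z))))
          = Real.exp (Real.log (L m) - k * (Real.log ℓ - Real.log (Real.log z))) := by
            rw [Real.exp_sub, Real.exp_log hLm, div_eq_mul_inv, Real.exp_neg]
      _ ≤ Real.exp (Real.log (L z)) := Real.exp_le_exp.mpr this
      _ = L z := Real.exp_log hLz
    have hexppos := Real.exp_pos (k * (Real.log ℓ - Real.log (Real.log z)))
    have hexpneg := Real.exp_pos (-(k * (Real.log ℓ - Real.log (Real.log z))))
    constructor
    · -- lower bound
      have hLup : 1 / L z ≥ (1 - (ℓ - Real.log z) / s) / L m := by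
        rw [ge_iff_le, div_le_div_iff₀ hLm hLz]
        calc (1 - (ℓ - Real.log z) / s) * L z
            ≤ Real.exp (-(k * (Real.log ℓ - Real.log (Real.log z)))) * L z := by
              apply mul_le_mul_of_nonneg_right hcl hLz.le
        _ ≤ 1 * L m := by
              have h5 : Real.exp (-(k * (Real.log ℓ - Real.log (Real.log z)))) *
                  Real.exp (k * (Real.log ℓ - Real.log (Real.log z))) = 1 := by
                rw [← Real.exp_add, neg_add_cancel, Real.exp_zero]
              nlinarith [mul_le_mul_of_nonneg_left hub hexpneg.le, hLm.le]
      calc 1 / L m * (1 / z) - 1 / (L m * s) * ((ℓ - Real.log z) * (1 / z))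
          = (1 - (ℓ - Real.log z) / s) / L m * (1 / z) := by
            field_simp
      _ ≤ 1 / L z * (1 / z) := mul_le_mul_of_nonneg_right hLup (by positivity)
      _ = 1 / (z * L z) := by rw [div_mul_div_comm, one_mul, mul_comm]
    · -- upper bound
      have hLup : 1 / L z ≤ (1 + (ℓ - Real.log z) / s) / L m := by
        rw [div_le_div_iff₀ hLz hLm]
        calc 1 * L m
            = L m * (Real.exp (-(k * (Real.log ℓ - Real.log (Real.log z)))) *
              Real.exp (k * (Real.log ℓ - Real.log (Real.log z)))) := by
              rw [← Real.exp_add, neg_add_cancel, Real.exp_zero, mul_one, one_mul]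
        _ ≤ (1 + (ℓ - Real.log z) / s) * L z := by
              nlinarith [mul_le_mul_of_nonneg_right hlb hexppos.le]
      calc 1 / (z * L z) = 1 / L z * (1 / z) := by
            rw [div_mul_div_comm, one_mul, mul_comm]
      _ ≤ (1 + (ℓ - Real.log z) / s) / L m * (1 / z) :=
            mul_le_mul_of_nonneg_right hLup (by positivity)
      _ = 1 / L m * (1 / z) + 1 / (L m * s) * ((ℓ - Real.log z) * (1 / z)) := by
            field_simp
    -- integrability
  have hfc : ∀ z ∈ Set.Icc 1 m, ContinuousAt (fun z => 1 / (z * L z)) z := by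
    intro z hz
    have hz1 : (1:ℝ) ≤ z := hz.1
    have hLz := hpos z hz1
    have hzL : ContinuousAt (fun z => z * L z) z :=
      continuousAt_id.mul (hderiv z hz1).continuousAt
    exact continuousAt_const.div hzL (by positivity)
  have hfcont : ContinuousOn (fun z => 1 / (z * L z)) (Set.Icc 1 m) :=
    fun z hz => (hfc z hz).continuousWithinAt
  have hI1 : IntervalIntegrable (fun z => 1 / (z * L z)) MeasureTheory.volume 1 a := by
    apply ContinuousOn.intervalIntegrable
    apply hfcont.mono
    rw [Set.uIcc_of_le (by linarith : (1:ℝ) ≤ a)]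
    exact Set.Icc_subset_Icc le_rfl ham
  have hI2 : IntervalIntegrable (fun z => 1 / (z * L z)) MeasureTheory.volume a m := by
    apply ContinuousOn.intervalIntegrable
    apply hfcont.mono
    rw [Set.uIcc_of_le ham]
    exact Set.Icc_subset_Icc (by linarith) le_rfl
  have hadd : (∫ z in (1:ℝ)..a, 1 / (z * L z)) + (∫ z in a..m, 1 / (z * L z)) =
      ∫ z in (1:ℝ)..m, 1 / (z * L z) :=
    intervalIntegral.integral_add_adjacent_intervals hI1 hI2
  -- basic integrals
  have hzero : (0:ℝ) ∉ Set.uIcc a m := by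
    rw [Set.uIcc_of_le ham]
    rintro ⟨h1, _⟩
    linarith
  have hint1 : (∫ z in a..m, 1 / z) = s := by
    rw [integral_one_div hzero, Real.log_div hm0.ne' (by linarith : a ≠ 0)]
    rw [hloga]
    ring
  have hgc : ContinuousOn (fun z => (ℓ - Real.log z) * (1 / z)) (Set.uIcc a m) := by
    rw [Set.uIcc_of_le ham]
    intro z hz
    have hz0 : (0:ℝ) < z := by linarith [hz.1]
    exact (((continuousAt_const.sub (Real.continuousAt_log hz0.ne')).mul
      (continuousAt_const.div continuousAt_id hz0.ne'))).continuousWithinAt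
  have hgint : IntervalIntegrable (fun z => (ℓ - Real.log z) * (1 / z))
      MeasureTheory.volume a m := hgc.intervalIntegrable
  have h1zc : ContinuousOn (fun z : ℝ => 1 / z) (Set.uIcc a m) := by
    rw [Set.uIcc_of_le ham]
    intro z hz
    have hz0 : (0:ℝ) < z := by linarith [hz.1]
    exact (continuousAt_const.div continuousAt_id hz0.ne').continuousWithinAt
  have h1zint : IntervalIntegrable (fun z : ℝ => 1 / z) MeasureTheory.volume a m :=
    h1zc.intervalIntegrable
  have hint2 : (∫ z in a..m, (ℓ - Real.log z) * (1 / z)) = s ^ 2 / 2 := by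
    have hciv : ∀ z ∈ Set.uIcc a m,
        HasDerivAt (fun z => -((ℓ - Real.log z) ^ 2 / 2)) ((ℓ - Real.log z) * (1 / z)) z := by
      intro z hz
      rw [Set.uIcc_of_le ham] at hz
      have hz0 : (0:ℝ) < z := by linarith [hz.1]
      have h1 : HasDerivAt (fun z => ℓ - Real.log z) (-z⁻¹) z :=
        (Real.hasDerivAt_log hz0.ne').const_sub ℓ
      have h2 : HasDerivAt (fun z => -((ℓ - Real.log z) ^ 2 / 2)) _ z :=
        ((h1.pow 2).div_const 2).neg
      convert h2 using 1
      field_simp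
      ring
    rw [intervalIntegral.integral_eq_sub_of_hasDerivAt hciv hgint]
    rw [hloga]
    ring
  -- integral bounds
  have hg1int : IntervalIntegrable
      (fun z => 1 / L m * (1 / z) + 1 / (L m * s) * ((ℓ - Real.log z) * (1 / z)))
      MeasureTheory.volume a m :=
    (h1zint.const_mul _).add (hgint.const_mul _)
  have hg0int : IntervalIntegrable
      (fun z => 1 / L m * (1 / z) - 1 / (L m * s) * ((ℓ - Real.log z) * (1 / z)))
      MeasureTheory.volume a m :=
    (h1zint.const_mul _).sub (hgint.const_mul _)
  have hIub : (∫ z in a..m, 1 / (z * L z)) ≤ 3 * s / (2 * L m) := by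
    have h := intervalIntegral.integral_mono_on ham hI2 hg1int
      (fun z hz => (hpt z hz).2)
    rw [intervalIntegral.integral_add (h1zint.const_mul _) (hgint.const_mul _),
      intervalIntegral.integral_const_mul, intervalIntegral.integral_const_mul,
      hint1, hint2] at h
    have heq : 1 / L m * s + 1 / (L m * s) * (s ^ 2 / 2) = 3 * s / (2 * L m) := by
      field_simp
      ring
    linarith
  have hIlb : s / (2 * L m) ≤ ∫ z in a..m, 1 / (z * L z) := by
    have h := intervalIntegral.integral_mono_on ham hg0int hI2
      (fun z hz => (hpt z hz).1)
    rw [intervalIntegral.integral_sub (h1zint.const_mul _) (hgint.const_mul _),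
      intervalIntegral.integral_const_mul, intervalIntegral.integral_const_mul,
      hint1, hint2] at h
    have heq : 1 / L m * s - 1 / (L m * s) * (s ^ 2 / 2) = s / (2 * L m) := by
      field_simp
      ring
    linarith
  -- conclusion
  have hΦm := hΦ m hm
  have hΦa := hΦ a (by linarith : (1:ℝ) ≤ a)
  have hΦmpos : 0 < Φ m := by rw [hΦm]; positivity
  have hId : Φ a = Φ m * Real.exp (-(∫ z in a..m, 1 / (z * L z))) := by
    rw [hΦa, hΦm, mul_assoc, ← Real.exp_add]
    congr 2
    linarith
  constructor
  · rw [hId]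
    apply mul_le_mul_of_nonneg_left _ hΦmpos.le
    apply Real.exp_le_exp.mpr
    rw [neg_div]
    have : 3 * s / (2 * L m) = (3 * s) / (2 * L m) := by ring
    linarith
  · rw [hId]
    apply mul_le_mul_of_nonneg_left _ hΦmpos.le
    apply Real.exp_le_exp.mpr
    rw [neg_div]
    linarith
end

section
/- Let Φ(m) = Φ(1) exp(∫₁^m dz/(z L(z))) with L as in Assumption A2 (|zL'(z)|/L(z) < k/log z for z ≥ 1), and suppose Φ(n) ≤ n for all n (from the Lévy normalization). If L(n) < log(n)/(4(κ∨1)) with κ = k2^k, then Ψ(n) := ∫₀^{∞} Φ(n e^{-t}) dt satisfies Ψ(n) ≤ 1 + Φ(n) L(n) (2 + 4(κ∨1)/e). -/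
open Real MeasureTheory Set

set_option maxHeartbeats 2000000 in
/-- Corollary (ADB-Psi(n)-bds), first bound: if L(n) < log n/(4(κ∨1)), κ = k·2^k, then
Ψ(n) = ∫₀^∞ Φ(n e^{-t}) dt ≤ 1 + Φ(n) L(n) (2 + 4(κ∨1)/e). -/
theorem stmt_9 (L L' Φ : ℝ → ℝ) (k : ℝ) (hk : 0 < k)
    (hderiv : ∀ z ≥ (1:ℝ), HasDerivAt L (L' z) z)
    (hpos : ∀ z ≥ (1:ℝ), 0 < L z)
    (hA2 : ∀ z > (1:ℝ), |z * L' z| / L z < k / Real.log z)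
    (hΦ1 : 0 < Φ 1)
    (hΦ : ∀ m ≥ (1:ℝ), Φ m = Φ 1 * Real.exp (∫ z in (1:ℝ)..m, 1 / (z * L z)))
    (hΦnonneg : ∀ m > (0:ℝ), 0 ≤ Φ m)
    (hΦle : ∀ m > (0:ℝ), Φ m ≤ m)
    (n : ℝ) (hn : 1 < n)
    (hL : L n < Real.log n / (4 * max (k * (2:ℝ) ^ k) 1)) :
    (∫ t in Set.Ioi (0:ℝ), Φ (n * Real.exp (-t)))
      ≤ 1 + Φ n * L n * (2 + 4 * max (k * (2:ℝ) ^ k) 1 / Real.exp 1) := by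
  set M := max (k * (2:ℝ) ^ k) 1 with hMdef
  have hM1 : (1:ℝ) ≤ M := le_max_right _ _
  have hM0 : (0:ℝ) < M := lt_of_lt_of_le one_pos hM1
  have hlogn : 0 < Real.log n := Real.log_pos hn
  have hn0 : (0:ℝ) < n := by linarith
  have hLn : 0 < L n := hpos n hn.le
  have hΦn0 : 0 ≤ Φ n := hΦnonneg n hn0
  have hexp1 : (0:ℝ) < Real.exp 1 := Real.exp_pos 1
  by_cases hint : IntegrableOn (fun t => Φ (n * Real.exp (-t))) (Set.Ioi (0:ℝ))
  swap
  · rw [MeasureTheory.integral_undef hint]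
    have h2 : 0 ≤ Φ n * L n * (2 + 4 * M / Real.exp 1) := by
      apply mul_nonneg (mul_nonneg hΦn0 hLn.le); positivity
    linarith
  set kn := Real.log n / (2 * M) with hkndef
  have hkn0 : 0 < kn := by positivity
  have hknle : kn ≤ Real.log n / 2 := by
    rw [hkndef, div_le_div_iff₀ (by positivity) (by norm_num)]
    nlinarith
  have hknlt : kn < Real.log n := lt_of_le_of_lt hknle (by linarith)
  set c := n * Real.exp (-kn) with hcdef
  have hc0 : 0 < c := by positivity
  have hlogc : Real.log c = Real.log n - kn := by
    rw [hcdef, Real.log_mul hn0.ne' (Real.exp_ne_zero _), Real.log_exp]; ring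
  have hlogc0 : 0 < Real.log c := by rw [hlogc]; linarith
  have hc1 : 1 < c := (Real.log_pos_iff hc0.le).mp hlogc0
  have hcn : c ≤ n := by
    have h1 : Real.exp (-kn) ≤ 1 := by
      rw [← Real.exp_zero]; exact Real.exp_le_exp.mpr (by linarith)
    nlinarith
  -- continuity and integrability of 1/(z L z)
  have hLcont : ContinuousOn L (Set.Ici (1:ℝ)) :=
    fun z hz => ((hderiv z hz).continuousAt).continuousWithinAt
  have hfcont : ContinuousOn (fun z => 1 / (z * L z)) (Set.Icc (1:ℝ) n) := by
    apply ContinuousOn.div continuousOn_const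
    · exact (continuousOn_id.mul (hLcont.mono (fun z hz => hz.1)))
    · intro z hz
      have h1 := hpos z hz.1
      have h2 : (0:ℝ) < z := lt_of_lt_of_le one_pos hz.1
      positivity
  have hfint : ∀ a b : ℝ, 1 ≤ a → a ≤ b → b ≤ n →
      IntervalIntegrable (fun z => 1 / (z * L z)) volume a b := by
    intro a b ha hab hbn
    apply ContinuousOn.intervalIntegrable
    apply hfcont.mono
    rw [Set.uIcc_of_le hab]
    exact fun z hz => ⟨le_trans ha hz.1, le_trans hz.2 hbn⟩
  -- the key L bound
  have hklog2 : k / M ≤ Real.log 2 := by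
    rcases le_or_gt k (Real.log 2) with h | h
    · calc k / M ≤ k / 1 := by gcongr <;> linarith
        _ = k := div_one k
        _ ≤ Real.log 2 := h
    · have h2k : (1:ℝ) + Real.log 2 * k ≤ (2:ℝ) ^ k := by
        rw [Real.rpow_def_of_pos two_pos]
        have := Real.add_one_le_exp (Real.log 2 * k)
        linarith
      have hl2 := Real.log_two_gt_d9
      have hMk : k * (2:ℝ) ^ k ≤ M := le_max_left _ _
      have l2pos : (0:ℝ) < Real.log 2 := by linarith
      have s1 : (1 + Real.log 2 * k) * Real.log 2 ≤ (2:ℝ) ^ k * Real.log 2 :=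
        mul_le_mul_of_nonneg_right h2k l2pos.le
      have s2 : Real.log 2 * (Real.log 2 * Real.log 2) ≤ Real.log 2 * Real.log 2 * k := by
        nlinarith
      have cube : (0.6931471803:ℝ)^3 ≤ Real.log 2 ^ 3 :=
        pow_le_pow_left₀ (by norm_num) hl2.le 3
      have h1 : (1:ℝ) ≤ (2:ℝ) ^ k * Real.log 2 := by nlinarith [s1, s2, cube]
      have h2 : k ≤ M * Real.log 2 := by nlinarith
      rw [div_le_iff₀ hM0]; linarith [mul_comm M (Real.log 2)]
  have hLb : ∀ z ∈ Set.Icc c n, L z ≤ 2 * L n := by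
    have hH : StrictMonoOn
        (fun z => k * Real.log (Real.log z) + Real.log (L z)) (Set.Icc c n) := by
      apply strictMonoOn_of_hasDerivWithinAt_pos (convex_Icc c n) ?_
        (f' := fun x => k * ((Real.log x)⁻¹ * x⁻¹) + (L x)⁻¹ * L' x) ?_ ?_
      · intro z hz
        have hz1 : 1 < z := lt_of_lt_of_le hc1 hz.1
        have hz0 : (0:ℝ) < z := by linarith
        have hlz : 0 < Real.log z := Real.log_pos hz1
        have h1 : ContinuousAt (fun z => Real.log (Real.log z)) z :=
          (Real.continuousAt_log hlz.ne').comp (Real.continuousAt_log hz0.ne')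
        have h2 : ContinuousAt (fun z => Real.log (L z)) z :=
          (Real.continuousAt_log (hpos z hz1.le).ne').comp (hderiv z hz1.le).continuousAt
        exact (ContinuousAt.add (continuousAt_const.mul h1) h2).continuousWithinAt
      · rw [interior_Icc]
        intro x hx
        have hx1 : 1 < x := lt_of_lt_of_le hc1 hx.1.le
        have hx0 : (0:ℝ) < x := by linarith
        have hlx : 0 < Real.log x := Real.log_pos hx1
        have h1 : HasDerivAt (fun z => Real.log (Real.log z)) ((Real.log x)⁻¹ * x⁻¹) x :=
          (Real.hasDerivAt_log hlx.ne').comp x (Real.hasDerivAt_log hx0.ne')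
        have h2 : HasDerivAt (fun z => Real.log (L z)) ((L x)⁻¹ * L' x) x :=
          (Real.hasDerivAt_log (hpos x hx1.le).ne').comp x (hderiv x hx1.le)
        exact ((h1.const_mul k).add h2).hasDerivWithinAt
      · rw [interior_Icc]
        intro x hx
        have hx1 : 1 < x := lt_of_lt_of_le hc1 hx.1.le
        have hx0 : (0:ℝ) < x := by linarith
        have hlx : 0 < Real.log x := Real.log_pos hx1
        have hLx : 0 < L x := hpos x hx1.le
        have key : |x * L' x| * Real.log x < k * L x := by
          have := hA2 x hx1
          rw [div_lt_div_iff₀ hLx hlx] at this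
          linarith
        have habs : x * |L' x| = |x * L' x| := by rw [abs_mul, abs_of_pos hx0]
        have hge : -|L' x| ≤ L' x := neg_abs_le _
        have heq : k * ((Real.log x)⁻¹ * x⁻¹) + (L x)⁻¹ * L' x
            = (k * L x + x * Real.log x * L' x) / (x * Real.log x * L x) := by
          field_simp
        show 0 < k * ((Real.log x)⁻¹ * x⁻¹) + (L x)⁻¹ * L' x
        rw [heq]
        apply div_pos _ (by positivity)
        have h3 : x * Real.log x * (-|L' x|) ≤ x * Real.log x * L' x :=
          mul_le_mul_of_nonneg_left hge (by positivity)
        nlinarith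
    intro z hz
    have hz1 : 1 < z := lt_of_lt_of_le hc1 hz.1
    have hlz : 0 < Real.log z := Real.log_pos hz1
    have hLz : 0 < L z := hpos z hz1.le
    have h1 : k * Real.log (Real.log z) + Real.log (L z)
        ≤ k * Real.log (Real.log n) + Real.log (L n) :=
      (hH.monotoneOn) hz ⟨hcn, le_refl n⟩ hz.2
    have hlogzge : Real.log n - kn ≤ Real.log z := by
      rw [← hlogc]
      exact (Real.log_le_log_iff hc0 (by linarith)).mpr hz.1
    have h3 : Real.log (Real.log n) - Real.log (Real.log z) ≤ 1 / M := by
      rw [← Real.log_div hlogn.ne' hlz.ne']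
      have hd0 : 0 < Real.log n - kn := by linarith
      calc Real.log (Real.log n / Real.log z) ≤ Real.log n / Real.log z - 1 :=
            Real.log_le_sub_one_of_pos (by positivity)
        _ ≤ Real.log n / (Real.log n - kn) - 1 := by gcongr <;> linarith
        _ = kn / (Real.log n - kn) := by field_simp; ring
        _ ≤ kn / (Real.log n / 2) := by gcongr <;> linarith
        _ = 1 / M := by rw [hkndef]; field_simp
    have h4 : Real.log (L z) ≤ Real.log (2 * L n) := by
      rw [Real.log_mul two_ne_zero hLn.ne']
      have h5 : k * (Real.log (Real.log n) - Real.log (Real.log z)) ≤ k * (1 / M) :=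
        mul_le_mul_of_nonneg_left h3 hk.le
      have h6 : k * (1 / M) = k / M := by ring
      linarith [hklog2]
    exact (Real.log_le_log_iff hLz (by positivity)).mp h4
  -- Lemma B : decay bound for Φ on [c, n]
  have hB : ∀ m ∈ Set.Icc c n,
      Φ m ≤ Φ n * Real.exp (-((Real.log n - Real.log m) / (2 * L n))) := by
    intro m hm
    have hm1 : (1:ℝ) ≤ m := le_of_lt (lt_of_lt_of_le hc1 hm.1)
    have hm0 : (0:ℝ) < m := by linarith
    rw [hΦ m hm1, hΦ n hn.le, mul_assoc, ← Real.exp_add]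
    apply mul_le_mul_of_nonneg_left _ hΦ1.le
    apply Real.exp_le_exp.mpr
    have hsplit : (∫ z in (1:ℝ)..n, 1 / (z * L z))
        = (∫ z in (1:ℝ)..m, 1 / (z * L z)) + ∫ z in m..n, 1 / (z * L z) :=
      (intervalIntegral.integral_add_adjacent_intervals
        (hfint 1 m le_rfl hm1 hm.2) (hfint m n hm1 hm.2 le_rfl)).symm
    rw [hsplit]
    have hlow : (Real.log n - Real.log m) / (2 * L n) ≤ ∫ z in m..n, 1 / (z * L z) := by
      have hgint : IntervalIntegrable (fun z => (2 * L n)⁻¹ * (1 / z)) volume m n := by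
        apply ContinuousOn.intervalIntegrable
        apply ContinuousOn.mul continuousOn_const
        apply ContinuousOn.div continuousOn_const continuousOn_id
        intro z hz
        rw [Set.uIcc_of_le hm.2] at hz
        exact (lt_of_lt_of_le hm0 hz.1).ne'
      have mono := intervalIntegral.integral_mono_on hm.2 hgint (hfint m n hm1 hm.2 le_rfl)
        (fun z hz => by
          have hz0 : (0:ℝ) < z := lt_of_lt_of_le hm0 hz.1
          have hLz : 0 < L z := hpos z (le_trans hm1 hz.1)
          have hb : L z ≤ 2 * L n := hLb z ⟨le_trans hm.1 hz.1, hz.2⟩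
          have e0 : (2 * L n)⁻¹ * (1 / z) = 1 / (z * (2 * L n)) := by
            rw [one_div, one_div, ← mul_inv]; ring
          rw [e0, div_le_div_iff₀ (by positivity) (by positivity)]
          nlinarith)
      have e1 : (∫ z in m..n, (2 * L n)⁻¹ * (1 / z))
          = (2 * L n)⁻¹ * (Real.log n - Real.log m) := by
        rw [intervalIntegral.integral_const_mul, integral_one_div
          (by rw [Set.uIcc_of_le hm.2]; intro h; exact absurd h.1 (by linarith)),
          Real.log_div hn0.ne' hm0.ne']
      calc (Real.log n - Real.log m) / (2 * L n)
          = (2 * L n)⁻¹ * (Real.log n - Real.log m) := by ring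
        _ = ∫ z in m..n, (2 * L n)⁻¹ * (1 / z) := e1.symm
        _ ≤ ∫ z in m..n, 1 / (z * L z) := mono
    linarith
  -- monotonicity of Φ on [1, c]
  have hmono : ∀ m, 1 ≤ m → m ≤ c → Φ m ≤ Φ c := by
    intro m h1 h2
    rw [hΦ m h1, hΦ c hc1.le]
    apply mul_le_mul_of_nonneg_left _ hΦ1.le
    apply Real.exp_le_exp.mpr
    have hsplit : (∫ z in (1:ℝ)..c, 1 / (z * L z))
        = (∫ z in (1:ℝ)..m, 1 / (z * L z)) + ∫ z in m..c, 1 / (z * L z) :=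
      (intervalIntegral.integral_add_adjacent_intervals
        (hfint 1 m le_rfl h1 (le_trans h2 hcn)) (hfint m c h1 h2 hcn)).symm
    have hnn : 0 ≤ ∫ z in m..c, 1 / (z * L z) := by
      apply intervalIntegral.integral_nonneg h2
      intro u hu
      have hu0 : (0:ℝ) < u := lt_of_lt_of_le one_pos (le_trans h1 hu.1)
      have := hpos u (le_trans h1 hu.1)
      positivity
    rw [hsplit]; linarith
  -- pointwise bounds on the three regions
  have hA : ∀ t ∈ Set.Ioc (0:ℝ) kn,
      Φ (n * Real.exp (-t)) ≤ Φ n * Real.exp (-((2 * L n)⁻¹ * t)) := by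
    intro t ht
    have hm : n * Real.exp (-t) ∈ Set.Icc c n := by
      constructor
      · rw [hcdef]
        exact mul_le_mul_of_nonneg_left (Real.exp_le_exp.mpr (by linarith [ht.2])) hn0.le
      · nlinarith [Real.exp_le_one_iff.mpr (by linarith [ht.1] : -t ≤ 0), Real.exp_pos (-t)]
    have := hB _ hm
    have hlogm : Real.log (n * Real.exp (-t)) = Real.log n - t := by
      rw [Real.log_mul hn0.ne' (Real.exp_ne_zero _), Real.log_exp]; ring
    rw [hlogm] at this
    convert this using 3
    ring
  have hBpt : ∀ t ∈ Set.Ioc kn (Real.log n),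
      Φ (n * Real.exp (-t)) ≤ Φ n * Real.exp (-((2 * L n)⁻¹ * kn)) := by
    intro t ht
    have hm1 : (1:ℝ) ≤ n * Real.exp (-t) := by
      have h1 : Real.exp (-Real.log n) ≤ Real.exp (-t) := Real.exp_le_exp.mpr (by linarith [ht.2])
      have h2 : Real.exp (-Real.log n) = n⁻¹ := by rw [Real.exp_neg, Real.exp_log hn0]
      calc (1:ℝ) = n * n⁻¹ := by field_simp
        _ ≤ n * Real.exp (-t) := by rw [← h2]; exact mul_le_mul_of_nonneg_left h1 hn0.le
    have hmc : n * Real.exp (-t) ≤ c := by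
      rw [hcdef]
      exact mul_le_mul_of_nonneg_left (Real.exp_le_exp.mpr (by linarith [ht.1])) hn0.le
    have h1 : Φ (n * Real.exp (-t)) ≤ Φ c := hmono _ hm1 hmc
    have h2 := hB c ⟨le_refl c, hcn⟩
    rw [hlogc] at h2
    have h3 : (Real.log n - (Real.log n - kn)) / (2 * L n) = (2 * L n)⁻¹ * kn := by ring
    rw [h3] at h2
    linarith
  have hC : ∀ t ∈ Set.Ioi (Real.log n),
      Φ (n * Real.exp (-t)) ≤ n * Real.exp (-t) := by
    intro t _
    exact hΦle _ (by positivity)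
  -- integrable bounding functions
  have hg1 : IntegrableOn (fun t => Φ n * Real.exp (-((2 * L n)⁻¹ * t))) (Set.Ioi (0:ℝ)) := by
    have := (exp_neg_integrableOn_Ioi 0 (show (0:ℝ) < (2 * L n)⁻¹ by positivity)).const_mul (Φ n)
    simpa [neg_mul, IntegrableOn] using this
  have hg3 : IntegrableOn (fun t => n * Real.exp (-t)) (Set.Ioi (Real.log n)) := by
    have := (exp_neg_integrableOn_Ioi (Real.log n) one_pos).const_mul n
    simpa [IntegrableOn] using this
  -- split the integral
  have hsub1 : Set.Ioc (0:ℝ) kn ⊆ Set.Ioi (0:ℝ) := Set.Ioc_subset_Ioi_self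
  have hsub2 : Set.Ioc kn (Real.log n) ⊆ Set.Ioi (0:ℝ) := fun x hx => lt_trans hkn0 hx.1
  have hsub3 : Set.Ioi (Real.log n) ⊆ Set.Ioi (0:ℝ) := fun x hx => lt_trans hlogn hx
  have hsplitI : (∫ t in Set.Ioi (0:ℝ), Φ (n * Real.exp (-t)))
      = (∫ t in Set.Ioc (0:ℝ) kn, Φ (n * Real.exp (-t)))
        + (∫ t in Set.Ioc kn (Real.log n), Φ (n * Real.exp (-t)))
        + ∫ t in Set.Ioi (Real.log n), Φ (n * Real.exp (-t)) := by
    have hsub12 : Set.Ioc (0:ℝ) (Real.log n) ⊆ Set.Ioi (0:ℝ) := Set.Ioc_subset_Ioi_self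
    have h1 : (∫ t in Set.Ioi (0:ℝ), Φ (n * Real.exp (-t)))
        = (∫ t in Set.Ioc (0:ℝ) (Real.log n), Φ (n * Real.exp (-t)))
          + ∫ t in Set.Ioi (Real.log n), Φ (n * Real.exp (-t)) := by
      rw [← setIntegral_union (Set.Ioc_disjoint_Ioi le_rfl) measurableSet_Ioi
        (hint.mono_set hsub12) (hint.mono_set hsub3),
        Set.Ioc_union_Ioi_eq_Ioi hlogn.le]
    have h2 : (∫ t in Set.Ioc (0:ℝ) (Real.log n), Φ (n * Real.exp (-t)))
        = (∫ t in Set.Ioc (0:ℝ) kn, Φ (n * Real.exp (-t)))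
          + ∫ t in Set.Ioc kn (Real.log n), Φ (n * Real.exp (-t)) := by
      rw [← setIntegral_union (Set.Ioc_disjoint_Ioc_of_le le_rfl) measurableSet_Ioc
        (hint.mono_set hsub1) (hint.mono_set hsub2),
        Set.Ioc_union_Ioc_eq_Ioc hkn0.le hknlt.le]
    rw [h1, h2]
  rw [hsplitI]
  -- bound each piece
  have E1 : (∫ t in Set.Ioc (0:ℝ) kn, Φ (n * Real.exp (-t))) ≤ Φ n * (2 * L n) := by
    calc (∫ t in Set.Ioc (0:ℝ) kn, Φ (n * Real.exp (-t)))
        ≤ ∫ t in Set.Ioc (0:ℝ) kn, Φ n * Real.exp (-((2 * L n)⁻¹ * t)) :=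
          setIntegral_mono_on (hint.mono_set hsub1) (hg1.mono_set hsub1)
            measurableSet_Ioc hA
      _ ≤ ∫ t in Set.Ioi (0:ℝ), Φ n * Real.exp (-((2 * L n)⁻¹ * t)) :=
          setIntegral_mono_set hg1 (ae_of_all _ (fun x => by positivity))
            (HasSubset.Subset.eventuallyLE hsub1)
      _ = Φ n * ∫ t in Set.Ioi (0:ℝ), Real.exp (-((2 * L n)⁻¹ * t)) := integral_const_mul _ _
      _ = Φ n * (2 * L n) := by
          rw [integral_comp_mul_left_Ioi (fun x => Real.exp (-x)) 0
            (show (0:ℝ) < (2 * L n)⁻¹ by positivity)]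
          simp [integral_exp_neg_Ioi, inv_inv, integral_exp_Iic_zero]
  have E2 : (∫ t in Set.Ioc kn (Real.log n), Φ (n * Real.exp (-t)))
      ≤ Φ n * L n * (4 * M / Real.exp 1) := by
    have hconst : (∫ t in Set.Ioc kn (Real.log n), Φ n * Real.exp (-((2 * L n)⁻¹ * kn)))
        = (Real.log n - kn) * (Φ n * Real.exp (-((2 * L n)⁻¹ * kn))) := by
      rw [setIntegral_const, Real.volume_real_Ioc_of_le hknlt.le]
      simp
    calc (∫ t in Set.Ioc kn (Real.log n), Φ (n * Real.exp (-t)))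
        ≤ ∫ t in Set.Ioc kn (Real.log n), Φ n * Real.exp (-((2 * L n)⁻¹ * kn)) :=
          setIntegral_mono_on (hint.mono_set hsub2)
            (integrableOn_const (by rw [Real.volume_Ioc]; exact ENNReal.ofReal_ne_top))
            measurableSet_Ioc hBpt
      _ = (Real.log n - kn) * (Φ n * Real.exp (-((2 * L n)⁻¹ * kn))) := hconst
      _ ≤ Φ n * L n * (4 * M / Real.exp 1) := by
          set x := (2 * L n)⁻¹ * kn with hxdef
          have hx0 : 0 < x := by positivity
          have hlogneq : Real.log n = 4 * M * L n * x := by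
            rw [hxdef, hkndef]; field_simp; ring
          have hxexp : x * Real.exp (-x) ≤ (Real.exp 1)⁻¹ := by
            have h1 : x ≤ Real.exp (x - 1) := by
              have := Real.add_one_le_exp (x - 1); linarith
            have h2 : Real.exp (x - 1) * Real.exp (-x) = (Real.exp 1)⁻¹ := by
              rw [← Real.exp_add, ← Real.exp_neg]; ring_nf
            calc x * Real.exp (-x) ≤ Real.exp (x - 1) * Real.exp (-x) :=
                  mul_le_mul_of_nonneg_right h1 (Real.exp_pos _).le
              _ = (Real.exp 1)⁻¹ := h2
          have hexpx : 0 < Real.exp (-x) := Real.exp_pos _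
          have step1 : (Real.log n - kn) * (Φ n * Real.exp (-x))
              ≤ Real.log n * (Φ n * Real.exp (-x)) := by
            nlinarith [mul_nonneg (mul_nonneg hkn0.le hΦn0) hexpx.le]
          have step2 : Real.log n * (Φ n * Real.exp (-x))
              ≤ Φ n * L n * (4 * M / Real.exp 1) := by
            rw [hlogneq, div_eq_mul_inv]
            nlinarith [mul_le_mul_of_nonneg_left hxexp (mul_nonneg (mul_nonneg
              (mul_nonneg hΦn0 hLn.le) (by norm_num : (0:ℝ) ≤ 4)) hM0.le)]
          linarith
  have E3 : (∫ t in Set.Ioi (Real.log n), Φ (n * Real.exp (-t))) ≤ 1 := by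
    calc (∫ t in Set.Ioi (Real.log n), Φ (n * Real.exp (-t)))
        ≤ ∫ t in Set.Ioi (Real.log n), n * Real.exp (-t) :=
          setIntegral_mono_on (hint.mono_set hsub3) hg3 measurableSet_Ioi hC
      _ = n * Real.exp (-Real.log n) := by
          rw [integral_const_mul, integral_exp_neg_Ioi]
      _ = 1 := by rw [Real.exp_neg, Real.exp_log hn0]; field_simp
  have final : Φ n * (2 * L n) + Φ n * L n * (4 * M / Real.exp 1) + 1
      = 1 + Φ n * L n * (2 + 4 * M / Real.exp 1) := by ring
  linarith
end

section
/- Let N: (0,1] → [0,∞) be decreasing with N(1/y) slowly varying and unbounded as y → ∞, and define Φ(m) = m ∫₀¹ e^{-mx} N(x) dx and Φ₀(m) = m ∫₀¹ (1-x)^{m-1} N(x) dx. Then Φ(m) − Φ₀(m) = o(Φ(m)/m) as m → ∞. -/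
open Real MeasureTheory Filter Set

lemma aux_sq_exp_anti {K u : ℝ} (hK : 2 ≤ K) (hu : K ≤ u) :
    u^2 * Real.exp (-u) ≤ K^2 * Real.exp (-K) := by
  have e1 : 1 + (u-K)/2 ≤ Real.exp ((u-K)/2) := by
    have := Real.add_one_le_exp ((u-K)/2); linarith
  have e2 : Real.exp (u - K) = Real.exp ((u-K)/2) * Real.exp ((u-K)/2) := by
    rw [← Real.exp_add]; ring_nf
  have e3 : u^2 ≤ K^2 * Real.exp (u - K) := by
    set s := Real.exp ((u-K)/2) with hs
    have hs0 : 0 < s := Real.exp_pos _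
    have hKs : u ≤ K * s := by nlinarith
    have hu0 : 0 ≤ u := by linarith
    rw [e2]
    nlinarith
  have e4 : Real.exp (u-K) * Real.exp (-u) = Real.exp (-K) := by
    rw [← Real.exp_add]; ring_nf
  calc u^2 * Real.exp (-u) ≤ (K^2 * Real.exp (u-K)) * Real.exp (-u) := by
        have := Real.exp_pos (-u); nlinarith
    _ = K^2 * Real.exp (-K) := by rw [mul_assoc, e4]

lemma aux_Fnn {α m : ℝ} (h0 : 0 ≤ α) (h1 : α ≤ 1) (hm : 0 ≤ m) :
    (1-α)^m ≤ Real.exp (-(m*α)) := by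
  have h : (1-α) ≤ Real.exp (-α) := by have := Real.add_one_le_exp (-α); linarith
  calc (1-α)^m ≤ (Real.exp (-α))^m := Real.rpow_le_rpow (by linarith) h hm
    _ = Real.exp (-(m*α)) := by
        rw [Real.rpow_def_of_pos (Real.exp_pos _), Real.log_exp]; ring_nf

lemma aux_log_bound {α : ℝ} (h0 : 0 ≤ α) (h1 : α ≤ 1/2) :
    -Real.log (1-α) - α ≤ 2*α^2 := by
  have habs : |α| < 1 := by rw [abs_of_nonneg h0]; linarith
  have := Real.abs_log_sub_add_sum_range_le habs 1
  simp only [Finset.sum_range_one, pow_one] at this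
  have h2 : |α + Real.log (1-α)| ≤ |α|^2 / (1-|α|) := by
    convert this using 2 <;> norm_num
  rw [abs_of_nonneg h0] at h2
  have h3 : α^2 / (1-α) ≤ 2*α^2 := by
    rw [div_le_iff₀ (by linarith)]; nlinarith
  have h4 := abs_le.1 h2
  linarith [h4.1]

lemma aux_Fb {α m : ℝ} (hα0 : 0 ≤ α) (hα : α ≤ 1/2) (hm : 1 ≤ m) :
    Real.exp (-(m*α)) - (1-α)^m ≤ 2*m*α^2 * Real.exp (-(m*α)) := by
  have h1α : (0:ℝ) < 1 - α := by linarith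
  have hlog : -Real.log (1-α) - α ≤ 2*α^2 := aux_log_bound hα0 hα
  have hrw : (1-α)^m = Real.exp (Real.log (1-α) * m) := Real.rpow_def_of_pos h1α m
  have hle : Real.log (1-α) ≤ -α := by
    have := Real.log_le_sub_one_of_pos h1α; linarith
  set v := m * (Real.log (1-α) + α) with hv
  have hv0 : v ≤ 0 := mul_nonpos_of_nonneg_of_nonpos (by linarith) (by linarith)
  have key : Real.exp (Real.log (1-α) * m) = Real.exp (-(m*α)) * Real.exp v := by
    rw [← Real.exp_add, hv]; ring_nf
  have h2 : 1 - Real.exp v ≤ -v := by have := Real.add_one_le_exp v; linarith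
  have h3 : -v ≤ 2*m*α^2 := by
    have : -v = m * (-Real.log (1-α) - α) := by rw [hv]; ring
    rw [this]
    calc m * (-Real.log (1-α) - α) ≤ m * (2*α^2) := by
          apply mul_le_mul_of_nonneg_left hlog (by linarith)
      _ = 2*m*α^2 := by ring
  have hep := Real.exp_pos (-(m*α))
  rw [hrw, key]
  calc Real.exp (-(m*α)) - Real.exp (-(m*α)) * Real.exp v
      = Real.exp (-(m*α)) * (1 - Real.exp v) := by ring
    _ ≤ Real.exp (-(m*α)) * (-v) := by
        apply mul_le_mul_of_nonneg_left h2 (le_of_lt hep)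
    _ ≤ Real.exp (-(m*α)) * (2*m*α^2) := by
        apply mul_le_mul_of_nonneg_left h3 (le_of_lt hep)
    _ = 2*m*α^2 * Real.exp (-(m*α)) := by ring

lemma aux_int_k1 {m : ℝ} (hm : 0 < m) (α : ℝ) :
    ∫ x in (0:ℝ)..α, m * Real.exp (-(m*x)) = 1 - Real.exp (-(m*α)) := by
  have h : ∀ x ∈ uIcc (0:ℝ) α, HasDerivAt (fun y => -Real.exp (-(m*y))) (m * Real.exp (-(m*x))) x := by
    intro x _
    have h1 : HasDerivAt (fun y : ℝ => -(m*y)) (-m) x := by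
      simpa using ((hasDerivAt_id x).const_mul m).fun_neg
    have := h1.exp
    exact this.neg.congr_deriv (by ring)
  rw [intervalIntegral.integral_eq_sub_of_hasDerivAt h]
  · simp; ring
  · apply Continuous.intervalIntegrable
    exact continuous_const.mul ((continuous_const.mul continuous_id).neg.rexp)

lemma aux_int_k2 {m : ℝ} (hm : 1 ≤ m) (α : ℝ) :
    ∫ x in (0:ℝ)..α, m * (1-x)^(m-1) = 1 - (1-α)^m := by
  have h : ∀ x ∈ uIcc (0:ℝ) α, HasDerivAt (fun y => -((1-y)^m)) (m * (1-x)^(m-1)) x := by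
    intro x _
    have h1 : HasDerivAt (fun y : ℝ => 1 - y) (-1) x := by
      simpa using (hasDerivAt_id x).const_sub 1
    have h2 := (h1.rpow_const (Or.inr hm)).neg
    exact h2.congr_deriv (by ring)
  rw [intervalIntegral.integral_eq_sub_of_hasDerivAt h]
  · simp [Real.one_rpow]; ring
  · apply Continuous.intervalIntegrable
    apply continuous_const.mul
    exact (continuous_const.sub continuous_id).rpow_const (fun x => Or.inr (by linarith))
noncomputable def aN (N : ℝ → ℝ) (t : ℝ) : ℝ :=
  sSup ({x : ℝ | x ∈ Set.Ioc (0:ℝ) 1 ∧ t < N x} ∪ {0})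

section aNlemmas
variable (N : ℝ → ℝ) (t : ℝ)

lemma aN_bddAbove : BddAbove ({x : ℝ | x ∈ Set.Ioc (0:ℝ) 1 ∧ t < N x} ∪ {0}) := by
  refine ⟨1, ?_⟩
  rintro x (⟨⟨_, hx1⟩, _⟩ | rfl)
  · exact hx1
  · norm_num

lemma aN_nonempty : ({x : ℝ | x ∈ Set.Ioc (0:ℝ) 1 ∧ t < N x} ∪ {0}).Nonempty :=
  ⟨0, Or.inr rfl⟩

lemma aN_mem : aN N t ∈ Set.Icc (0:ℝ) 1 := by
  constructor
  · exact le_csSup (aN_bddAbove N t) (Or.inr rfl)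
  · apply csSup_le (aN_nonempty N t)
    rintro x (⟨⟨_, hx1⟩, _⟩ | rfl)
    · exact hx1
    · norm_num

lemma le_aN {x : ℝ} (hx : x ∈ Set.Ioc (0:ℝ) 1) (ht : t < N x) : x ≤ aN N t :=
  le_csSup (aN_bddAbove N t) (Or.inl ⟨hx, ht⟩)

lemma aN_lt_imp (hanti : AntitoneOn N (Set.Ioc 0 1)) {x : ℝ}
    (hx : x ∈ Set.Ioc (0:ℝ) 1) (hlt : x < aN N t) : t < N x := by
  obtain ⟨s, hs, hxs⟩ := exists_lt_of_lt_csSup (aN_nonempty N t) hlt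
  rcases hs with ⟨hs1, hs2⟩ | rfl
  · exact lt_of_lt_of_le hs2 (hanti hx hs1 (le_of_lt hxs))
  · exact absurd hxs (not_lt.2 (le_of_lt hx.1))

lemma aN_antitone : Antitone (aN N) := by
  intro t t' htt'
  apply csSup_le_csSup (aN_bddAbove N t) (aN_nonempty N t')
  rintro x (⟨hx1, hx2⟩ | rfl)
  · exact Or.inl ⟨hx1, lt_of_le_of_lt htt' hx2⟩
  · exact Or.inr rfl

lemma aN_squeeze_lower (hanti : AntitoneOn N (Set.Ioc 0 1)) :
    Set.Ioo 0 (aN N t) ⊆ {x : ℝ | x ∈ Set.Ioc (0:ℝ) 1 ∧ t < N x} := by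
  rintro y ⟨hy0, hy1⟩
  have hy01 : y ∈ Set.Ioc (0:ℝ) 1 :=
    ⟨hy0, le_trans (le_of_lt hy1) (aN_mem N t).2⟩
  exact ⟨hy01, aN_lt_imp N t hanti hy01 hy1⟩

lemma aN_squeeze_upper :
    {x : ℝ | x ∈ Set.Ioc (0:ℝ) 1 ∧ t < N x} ⊆ Set.Ioc 0 (aN N t) := by
  rintro x ⟨hx1, hx2⟩
  exact ⟨hx1.1, le_aN N t hx1 hx2⟩

end aNlemmas

/-- Layer cake: for continuous nonneg kernel `k`. -/
lemma aux_layer (N : ℝ → ℝ) (hmeas : Measurable N)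
    (hN0 : ∀ x ∈ Set.Ioc (0:ℝ) 1, 0 ≤ N x)
    (hanti : AntitoneOn N (Set.Ioc 0 1))
    (k : ℝ → ℝ) (hk : Continuous k) (hk0 : ∀ x ∈ Set.Icc (0:ℝ) 1, 0 ≤ k x) :
    ∫⁻ x in Set.Ioc (0:ℝ) 1, ENNReal.ofReal (k x * N x)
      = ∫⁻ t in Set.Ioi (0:ℝ), ENNReal.ofReal (∫ x in (0:ℝ)..(aN N t), k x) := by
  set G : ℝ × ℝ → ENNReal := fun p =>
    if p.2 < N p.1 then ENNReal.ofReal (k p.1) else 0 with hG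
  have hGmeas : Measurable G := by
    apply Measurable.ite
    · exact measurableSet_lt measurable_snd (hmeas.comp measurable_fst)
    · exact ((hk.measurable.comp measurable_fst)).ennreal_ofReal
    · exact measurable_const
  -- step 1: LHS = iterated integral
  have step1 : ∫⁻ x in Set.Ioc (0:ℝ) 1, ENNReal.ofReal (k x * N x)
      = ∫⁻ x in Set.Ioc (0:ℝ) 1, ∫⁻ t in Set.Ioi (0:ℝ), G (x, t) := by
    apply setLIntegral_congr_fun measurableSet_Ioc
    intro x hx; beta_reduce
    have hkx : 0 ≤ k x := hk0 x ⟨le_of_lt hx.1, hx.2⟩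
    have : (fun t => G (x, t)) = (Set.Iio (N x)).indicator (fun _ => ENNReal.ofReal (k x)) := by
      funext t
      simp only [hG, Set.indicator, Set.mem_Iio]
    rw [this, lintegral_indicator measurableSet_Iio, setLIntegral_const,
      Measure.restrict_apply measurableSet_Iio, Set.Iio_inter_Ioi, Real.volume_Ioo,
      sub_zero, ← ENNReal.ofReal_mul hkx]
  -- step 2: swap
  have step2 : ∫⁻ x in Set.Ioc (0:ℝ) 1, ∫⁻ t in Set.Ioi (0:ℝ), G (x, t)
      = ∫⁻ t in Set.Ioi (0:ℝ), ∫⁻ x in Set.Ioc (0:ℝ) 1, G (x, t) := by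
    exact lintegral_lintegral_swap (hGmeas.aemeasurable)
  rw [step1, step2]
  -- step 3: inner integral computation for fixed t > 0
  apply setLIntegral_congr_fun measurableSet_Ioi
  intro t ht; beta_reduce
  have hα := aN_mem N t
  have hin : ∫⁻ x in Set.Ioc (0:ℝ) 1, G (x, t)
      = ∫⁻ x in {x : ℝ | x ∈ Set.Ioc (0:ℝ) 1 ∧ t < N x}, ENNReal.ofReal (k x) := by
    have : (fun x => G (x, t)) = fun x =>
        ({x : ℝ | t < N x}).indicator (fun x => ENNReal.ofReal (k x)) x := by
      funext x; simp only [hG, Set.indicator, Set.mem_setOf_eq]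
    have hset : {x : ℝ | t < N x} ∩ Set.Ioc (0:ℝ) 1
        = {x : ℝ | x ∈ Set.Ioc (0:ℝ) 1 ∧ t < N x} := by
      ext x; exact and_comm
    rw [this, lintegral_indicator (measurableSet_lt measurable_const hmeas),
      Measure.restrict_restrict (measurableSet_lt measurable_const hmeas), hset]
  rw [hin]
  -- squeeze between Ioo and Ioc
  have hsq : ∫⁻ x in {x : ℝ | x ∈ Set.Ioc (0:ℝ) 1 ∧ t < N x}, ENNReal.ofReal (k x)
      = ∫⁻ x in Set.Ioo 0 (aN N t), ENNReal.ofReal (k x) := by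
    apply le_antisymm
    · calc ∫⁻ x in {x : ℝ | x ∈ Set.Ioc (0:ℝ) 1 ∧ t < N x}, ENNReal.ofReal (k x)
          ≤ ∫⁻ x in Set.Ioc 0 (aN N t), ENNReal.ofReal (k x) :=
            lintegral_mono_set (aN_squeeze_upper N t)
        _ = ∫⁻ x in Set.Ioo 0 (aN N t), ENNReal.ofReal (k x) := by
            rw [← Measure.restrict_congr_set Ioo_ae_eq_Ioc]
    · exact lintegral_mono_set (aN_squeeze_lower N t hanti)
  rw [hsq]
  -- compute as real integral
  have hki : IntegrableOn k (Set.Ioo 0 (aN N t)) volume :=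
    (hk.integrableOn_Icc (a := 0) (b := aN N t)).mono_set Set.Ioo_subset_Icc_self
  rw [← ofReal_integral_eq_lintegral_ofReal hki]
  · rw [← integral_Ioc_eq_integral_Ioo, ← intervalIntegral.integral_of_le hα.1]
  · filter_upwards [ae_restrict_mem measurableSet_Ioo] with x hx
    exact hk0 x ⟨le_of_lt hx.1, le_trans (le_of_lt hx.2) hα.2⟩
section main
variable {N : ℝ → ℝ}

lemma aux_int1 (hmeas : Measurable N) (hint : IntegrableOn N (Set.Ioc 0 1)) {m : ℝ} (hm : 2 ≤ m) :
    IntegrableOn (fun x => Real.exp (-(m*x)) * N x) (Set.Ioc (0:ℝ) 1) := by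
  apply Integrable.bdd_mul (c := 1) hint
  · exact (Continuous.aestronglyMeasurable (by continuity))
  · filter_upwards [ae_restrict_mem measurableSet_Ioc] with x hx
    rw [Real.norm_eq_abs, abs_of_nonneg (Real.exp_nonneg _)]
    exact Real.exp_le_one_iff.2 (by nlinarith [hx.1])

lemma aux_int2 (hmeas : Measurable N) (hint : IntegrableOn N (Set.Ioc 0 1)) {m : ℝ} (hm : 2 ≤ m) :
    IntegrableOn (fun x => (1-x)^(m-1) * N x) (Set.Ioc (0:ℝ) 1) := by
  apply Integrable.bdd_mul (c := 1) hint
  · apply Continuous.aestronglyMeasurable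
    exact (continuous_const.sub continuous_id).rpow_const (fun x => Or.inr (by linarith))
  · filter_upwards [ae_restrict_mem measurableSet_Ioc] with x hx
    rw [Real.norm_eq_abs, abs_of_nonneg (Real.rpow_nonneg (by linarith [hx.2]) _)]
    exact Real.rpow_le_one (by linarith [hx.2]) (by linarith [hx.1]) (by linarith)

lemma aux_oX (hmeas : Measurable N) (hN0 : ∀ x ∈ Set.Ioc (0:ℝ) 1, 0 ≤ N x)
    (hanti : AntitoneOn N (Set.Ioc 0 1)) (hint : IntegrableOn N (Set.Ioc 0 1))
    {m : ℝ} (hm : 2 ≤ m) :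
    ENNReal.ofReal (m * ∫ x in Set.Ioc (0:ℝ) 1, Real.exp (-(m*x)) * N x)
      = ∫⁻ t in Set.Ioi (0:ℝ), ENNReal.ofReal (1 - Real.exp (-(m * aN N t))) := by
  have hm0 : (0:ℝ) < m := by linarith
  have h1 : m * ∫ x in Set.Ioc (0:ℝ) 1, Real.exp (-(m*x)) * N x
      = ∫ x in Set.Ioc (0:ℝ) 1, (m * Real.exp (-(m*x))) * N x := by
    rw [← integral_const_mul]; congr 1; funext x; ring
  have hki : IntegrableOn (fun x => (m * Real.exp (-(m*x))) * N x) (Set.Ioc (0:ℝ) 1) := by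
    have := (aux_int1 hmeas hint hm).const_mul m
    simp only [mul_assoc]; exact this
  rw [h1, ofReal_integral_eq_lintegral_ofReal hki]
  · rw [aux_layer N hmeas hN0 hanti _ (by continuity)
      (fun x _ => mul_nonneg (le_of_lt hm0) (Real.exp_nonneg _))]
    apply setLIntegral_congr_fun measurableSet_Ioi
    intro t _; beta_reduce
    rw [aux_int_k1 hm0]
  · filter_upwards [ae_restrict_mem measurableSet_Ioc] with x hx
    exact mul_nonneg (mul_nonneg (le_of_lt hm0) (Real.exp_nonneg _)) (hN0 x hx)

lemma aux_oY (hmeas : Measurable N) (hN0 : ∀ x ∈ Set.Ioc (0:ℝ) 1, 0 ≤ N x)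
    (hanti : AntitoneOn N (Set.Ioc 0 1)) (hint : IntegrableOn N (Set.Ioc 0 1))
    {m : ℝ} (hm : 2 ≤ m) :
    ENNReal.ofReal (m * ∫ x in Set.Ioc (0:ℝ) 1, (1-x)^(m-1) * N x)
      = ∫⁻ t in Set.Ioi (0:ℝ), ENNReal.ofReal (1 - (1 - aN N t)^m) := by
  have hm0 : (0:ℝ) < m := by linarith
  have hkc : Continuous (fun x : ℝ => m * (1-x)^(m-1)) := by
    apply continuous_const.mul
    exact (continuous_const.sub continuous_id).rpow_const (fun x => Or.inr (by linarith))
  have h1 : m * ∫ x in Set.Ioc (0:ℝ) 1, (1-x)^(m-1) * N x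
      = ∫ x in Set.Ioc (0:ℝ) 1, (m * (1-x)^(m-1)) * N x := by
    rw [← integral_const_mul]; congr 1; funext x; ring
  have hki : IntegrableOn (fun x => (m * (1-x)^(m-1)) * N x) (Set.Ioc (0:ℝ) 1) := by
    have := (aux_int2 hmeas hint hm).const_mul m
    simp only [mul_assoc]; exact this
  rw [h1, ofReal_integral_eq_lintegral_ofReal hki]
  · rw [aux_layer N hmeas hN0 hanti _ hkc
      (fun x hx => mul_nonneg (le_of_lt hm0) (Real.rpow_nonneg (by linarith [hx.2]) _))]
    apply setLIntegral_congr_fun measurableSet_Ioi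
    intro t _; beta_reduce
    rw [aux_int_k2 (by linarith)]
  · filter_upwards [ae_restrict_mem measurableSet_Ioc] with x hx
    exact mul_nonneg (mul_nonneg (le_of_lt hm0)
      (Real.rpow_nonneg (by linarith [hx.2]) _)) (hN0 x hx)

lemma aux_phi_lb (hmeas : Measurable N) (hN0 : ∀ x ∈ Set.Ioc (0:ℝ) 1, 0 ≤ N x)
    (hanti : AntitoneOn N (Set.Ioc 0 1)) (hint : IntegrableOn N (Set.Ioc 0 1))
    {m : ℝ} (hm : 2 ≤ m) :
    (1 - Real.exp (-1)) * N (1/m)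
      ≤ m * ∫ x in Set.Ioc (0:ℝ) 1, Real.exp (-(m*x)) * N x := by
  have hm0 : (0:ℝ) < m := by linarith
  have h1m : (1:ℝ)/m ∈ Set.Ioc (0:ℝ) 1 := by
    constructor
    · positivity
    · rw [div_le_one hm0]; linarith
  have hint1 := aux_int1 hmeas hint hm
  have hnn : 0 ≤ᵐ[volume.restrict (Set.Ioc (0:ℝ) 1)] (fun x => Real.exp (-(m*x)) * N x) := by
    filter_upwards [ae_restrict_mem measurableSet_Ioc] with x hx
    exact mul_nonneg (Real.exp_nonneg _) (hN0 x hx)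
  have stepA : ∫ x in Set.Ioc (0:ℝ) (1/m), Real.exp (-(m*x)) * N x
      ≤ ∫ x in Set.Ioc (0:ℝ) 1, Real.exp (-(m*x)) * N x := by
    apply setIntegral_mono_set hint1 hnn
    exact HasSubset.Subset.eventuallyLE (Set.Ioc_subset_Ioc_right h1m.2)
  have stepB : ∫ x in Set.Ioc (0:ℝ) (1/m), Real.exp (-(m*x)) * N (1/m)
      ≤ ∫ x in Set.Ioc (0:ℝ) (1/m), Real.exp (-(m*x)) * N x := by
    apply setIntegral_mono_on
    · exact ((Continuous.integrableOn_Icc (by continuity)).mono_set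
        Set.Ioc_subset_Icc_self)
    · exact hint1.mono_set (Set.Ioc_subset_Ioc_right h1m.2)
    · exact measurableSet_Ioc
    · intro x hx
      apply mul_le_mul_of_nonneg_left _ (Real.exp_nonneg _)
      exact hanti ⟨hx.1, le_trans hx.2 h1m.2⟩ h1m hx.2
  have stepC : ∫ x in Set.Ioc (0:ℝ) (1/m), Real.exp (-(m*x)) * N (1/m)
      = (1 - Real.exp (-1))/m * N (1/m) := by
    rw [integral_mul_const]
    congr 1
    have h2 := aux_int_k1 hm0 (1/m)
    rw [intervalIntegral.integral_const_mul] at h2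
    have h3 : m * (1/m) = 1 := by field_simp
    rw [h3] at h2
    have h4 : ∫ x in (0:ℝ)..(1/m), Real.exp (-(m*x)) = (1 - Real.exp (-1))/m := by
      rw [eq_div_iff (ne_of_gt hm0), mul_comm]; exact h2
    rw [← h4, intervalIntegral.integral_of_le (le_of_lt h1m.1)]
  calc (1 - Real.exp (-1)) * N (1/m)
      = m * ((1 - Real.exp (-1))/m * N (1/m)) := by field_simp
    _ ≤ m * ∫ x in Set.Ioc (0:ℝ) 1, Real.exp (-(m*x)) * N x := by
        apply mul_le_mul_of_nonneg_left _ (le_of_lt hm0)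
        rw [← stepC] at *
        exact le_trans stepB stepA

end main
lemma aux_pointwise {N : ℝ → ℝ} (hN0 : ∀ x ∈ Set.Ioc (0:ℝ) 1, 0 ≤ N x)
    (hanti : AntitoneOn N (Set.Ioc 0 1))
    {m K κ : ℝ} (hm2 : 2 ≤ m) (hK2 : 2 ≤ K) (hm4K : 4*K ≤ m)
    (hκ0 : 0 < κ) (hκ1 : κ ≤ 1) {t : ℝ} (ht : t ∈ Set.Ioi (0:ℝ)) :
    ENNReal.ofReal (1 - (1 - aN N t)^m)
      ≤ ENNReal.ofReal (1 - Real.exp (-(m * aN N t)))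
        + ((Set.Iic (N (1/4))).indicator (fun _ => ENNReal.ofReal (Real.exp (-(m/2)))) t
        + (Set.Iic (N (K/(2*m)))).indicator (fun _ => ENNReal.ofReal (2*K^2*Real.exp (-K)/m)) t
        + (Set.Icc (N (2*K/m)) (N (κ/(2*m)))).indicator (fun _ => ENNReal.ofReal (2*K^2/m)) t
        + ENNReal.ofReal (2*κ/m) * ENNReal.ofReal (1 - Real.exp (-(m * aN N t)))) := by
  set α := aN N t with hα
  have hm0 : (0:ℝ) < m := by linarith
  have hα01 := aN_mem N t
  have hF0 : (1-α)^m ≤ Real.exp (-(m*α)) := aux_Fnn hα01.1 hα01.2 (by linarith)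
  set F := Real.exp (-(m*α)) - (1-α)^m with hFdef
  have hsplit : (1:ℝ) - (1-α)^m = (1 - Real.exp (-(m*α))) + F := by rw [hFdef]; ring
  rw [hsplit]
  refine le_trans (ENNReal.ofReal_add_le) (add_le_add_right ?_ _)
  -- now: ofReal F ≤ sum of four tail terms
  by_cases hA : 1/2 < α
  · -- Case A
    have hFb : F ≤ Real.exp (-(m/2)) := by
      have h1 : (0:ℝ) ≤ (1-α)^m := Real.rpow_nonneg (by linarith [hα01.2]) m
      have h2 : Real.exp (-(m*α)) ≤ Real.exp (-(m/2)) := by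
        apply Real.exp_le_exp.2; nlinarith
      rw [hFdef]; linarith
    have htmem : t ∈ Set.Iic (N (1/4)) := by
      have h14 : (1/4 : ℝ) ∈ Set.Ioc (0:ℝ) 1 := by norm_num
      exact le_of_lt (aN_lt_imp N t hanti h14 (by rw [← hα]; linarith))
    calc ENNReal.ofReal F ≤ (Set.Iic (N (1/4))).indicator
          (fun _ => ENNReal.ofReal (Real.exp (-(m/2)))) t := by
          rw [Set.indicator_of_mem htmem]; exact ENNReal.ofReal_le_ofReal hFb
      _ ≤ _ := le_add_right (le_add_right (le_add_right le_rfl))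
  · push_neg at hA
    have hFb2 : F ≤ 2*m*α^2 * Real.exp (-(m*α)) := aux_Fb hα01.1 hA (by linarith)
    by_cases hB : K < m*α
    · -- Case B
      have hu : (m*α)^2 * Real.exp (-(m*α)) ≤ K^2 * Real.exp (-K) :=
        aux_sq_exp_anti hK2 (le_of_lt hB)
      have hFb' : F ≤ 2*K^2*Real.exp (-K)/m := by
        have hrw : 2*m*α^2 * Real.exp (-(m*α)) = (2/m) * ((m*α)^2 * Real.exp (-(m*α))) := by
          field_simp
        rw [hrw] at hFb2
        calc F ≤ (2/m) * ((m*α)^2 * Real.exp (-(m*α))) := hFb2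
          _ ≤ (2/m) * (K^2 * Real.exp (-K)) := by
              apply mul_le_mul_of_nonneg_left hu; positivity
          _ = 2*K^2*Real.exp (-K)/m := by ring
      have htmem : t ∈ Set.Iic (N (K/(2*m))) := by
        have hx : K/(2*m) ∈ Set.Ioc (0:ℝ) 1 := by
          constructor
          · positivity
          · rw [div_le_one (by positivity)]; nlinarith
        apply le_of_lt (aN_lt_imp N t hanti hx _)
        rw [← hα, div_lt_iff₀ (by positivity)]
        nlinarith
      calc ENNReal.ofReal F ≤ (Set.Iic (N (K/(2*m)))).indicator
            (fun _ => ENNReal.ofReal (2*K^2*Real.exp (-K)/m)) t := by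
            rw [Set.indicator_of_mem htmem]; exact ENNReal.ofReal_le_ofReal hFb'
        _ ≤ _ := le_add_right (le_add_right (le_add_left le_rfl))
    · push_neg at hB
      by_cases hC : κ < m*α
      · -- Case C
        have hFb' : F ≤ 2*K^2/m := by
          have he1 : Real.exp (-(m*α)) ≤ 1 := Real.exp_le_one_iff.2 (by nlinarith [hα01.1])
          have h2 : (m*α)^2 ≤ K^2 := by nlinarith [hα01.1]
          have hrw : 2*m*α^2 * Real.exp (-(m*α)) = (2/m) * ((m*α)^2 * Real.exp (-(m*α))) := by
            field_simp
          rw [hrw] at hFb2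
          calc F ≤ (2/m) * ((m*α)^2 * Real.exp (-(m*α))) := hFb2
            _ ≤ (2/m) * (K^2 * 1) := by
                apply mul_le_mul_of_nonneg_left _ (by positivity)
                apply mul_le_mul h2 he1 (Real.exp_nonneg _) (by positivity)
            _ = 2*K^2/m := by ring
        have htmem : t ∈ Set.Icc (N (2*K/m)) (N (κ/(2*m))) := by
          constructor
          · by_contra hcon
            push_neg at hcon
            have hx3 : 2*K/m ∈ Set.Ioc (0:ℝ) 1 := by
              constructor
              · positivity
              · rw [div_le_one hm0]; linarith
            have hle := le_aN N t hx3 hcon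
            rw [← hα] at hle
            have h2K : m * (2*K/m) = 2*K := by field_simp
            nlinarith [mul_le_mul_of_nonneg_left hle (le_of_lt hm0)]
          · have hx4 : κ/(2*m) ∈ Set.Ioc (0:ℝ) 1 := by
              constructor
              · positivity
              · rw [div_le_one (by positivity)]; nlinarith
            apply le_of_lt (aN_lt_imp N t hanti hx4 _)
            rw [← hα, div_lt_iff₀ (by positivity)]
            nlinarith
        calc ENNReal.ofReal F ≤ (Set.Icc (N (2*K/m)) (N (κ/(2*m)))).indicator
              (fun _ => ENNReal.ofReal (2*K^2/m)) t := by
              rw [Set.indicator_of_mem htmem]; exact ENNReal.ofReal_le_ofReal hFb'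
          _ ≤ _ := le_add_right (le_add_left le_rfl)
      · -- Case D : m*α ≤ κ
        push_neg at hC
        have hue : m*α * Real.exp (-(m*α)) ≤ 1 - Real.exp (-(m*α)) := by
          have h1 := Real.add_one_le_exp (m*α)
          have hprod : Real.exp (m*α) * Real.exp (-(m*α)) = 1 := by
            rw [← Real.exp_add]; simp
          nlinarith [Real.exp_pos (-(m*α))]
        have hFb' : F ≤ (2*κ/m) * (1 - Real.exp (-(m*α))) := by
          have hαnn := hα01.1
          have hκm : α ≤ κ/m := by rw [le_div_iff₀ hm0]; linarith [hC]
          calc F ≤ 2*m*α^2 * Real.exp (-(m*α)) := hFb2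
            _ = (2*α) * (m*α * Real.exp (-(m*α))) := by ring
            _ ≤ (2*(κ/m)) * (m*α * Real.exp (-(m*α))) := by
                apply mul_le_mul_of_nonneg_right (by linarith)
                positivity
            _ ≤ (2*(κ/m)) * (1 - Real.exp (-(m*α))) := by
                apply mul_le_mul_of_nonneg_left hue (by positivity)
            _ = (2*κ/m) * (1 - Real.exp (-(m*α))) := by ring
        calc ENNReal.ofReal F
            ≤ ENNReal.ofReal ((2*κ/m) * (1 - Real.exp (-(m*α)))) :=
              ENNReal.ofReal_le_ofReal hFb'
          _ = ENNReal.ofReal (2*κ/m) * ENNReal.ofReal (1 - Real.exp (-(m*α))) :=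
              ENNReal.ofReal_mul (by positivity)
          _ ≤ _ := le_add_left le_rfl
set_option maxHeartbeats 2000000 in
/-- Lemma 2phis (case l = 0): with N decreasing on (0,1], N(1/y) slowly varying and
unbounded, Φ(m) = m ∫₀¹ e^{-mx} N(x) dx and Φ₀(m) = m ∫₀¹ (1-x)^{m-1} N(x) dx, one has
Φ(m) − Φ₀(m) = o(Φ(m)/m) as m → ∞. -/
theorem stmt_18 (N : ℝ → ℝ)
    (hmeas : Measurable N)
    (hnonneg : ∀ x ∈ Set.Ioc (0:ℝ) 1, 0 ≤ N x)
    (hanti : AntitoneOn N (Set.Ioc 0 1))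
    (hunb : Tendsto (fun y => N (1 / y)) atTop atTop)
    (hslow : ∀ l > (0:ℝ), Tendsto (fun y => N (1 / (l * y)) / N (1 / y)) atTop (nhds 1))
    (hint : IntegrableOn N (Set.Ioc 0 1)) :
    Tendsto (fun m =>
        ((m * ∫ x in Set.Ioc (0:ℝ) 1, Real.exp (-(m * x)) * N x)
          - (m * ∫ x in Set.Ioc (0:ℝ) 1, (1 - x) ^ (m - 1) * N x))
        / ((m * ∫ x in Set.Ioc (0:ℝ) 1, Real.exp (-(m * x)) * N x) / m))
      atTop (nhds 0) := by
  rw [NormedAddCommGroup.tendsto_nhds_zero]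
  intro ε hε
  set ε' := ε/2 with hε'def
  have hε'0 : 0 < ε' := by positivity
  have he1 : 0 < 1 - Real.exp (-1) := by
    have : Real.exp (-1) < 1 := Real.exp_lt_one_iff.2 (by norm_num)
    linarith
  set c₁ := ε'/4 * (1 - Real.exp (-1)) with hc₁def
  have hc₁0 : 0 < c₁ := by positivity
  -- choose K
  obtain ⟨K, hKev, hK2⟩ : ∃ K : ℝ, 4*K^2*Real.exp (-K) < c₁ ∧ 2 ≤ K := by
    have h4 : Tendsto (fun x : ℝ => 4*x^2*Real.exp (-x)) atTop (nhds 0) := by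
      have h := (tendsto_pow_mul_exp_neg_atTop_nhds_zero 2).const_mul (4:ℝ)
      rw [mul_zero] at h
      apply h.congr
      intro x; ring
    exact ((h4.eventually_lt_const hc₁0).and (eventually_ge_atTop 2)).exists
  have hK0 : (0:ℝ) < K := by linarith
  set κ := min (ε'/8) 1 with hκdef
  have hκ0 : 0 < κ := lt_min (by positivity) one_pos
  have hκ1 : κ ≤ 1 := min_le_right _ _
  have hκε : κ ≤ ε'/8 := min_le_left _ _
  set η := c₁ / (2*K^2) with hηdef
  have hη0 : 0 < η := by positivity
  -- eventual facts
  have evm : ∀ᶠ m : ℝ in atTop, 2 ≤ m ∧ 4*K ≤ m :=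
    (eventually_ge_atTop 2).and (eventually_ge_atTop (4*K))
  have evN1 : ∀ᶠ m : ℝ in atTop, 1 ≤ N (1/m) := hunb.eventually_ge_atTop 1
  have evE2 : ∀ᶠ m : ℝ in atTop, m * Real.exp (-(m/2)) * N (1/4) < c₁ := by
    have h1 : Tendsto (fun m : ℝ => m/2) atTop atTop :=
      tendsto_id.atTop_div_const two_pos
    have h2 : Tendsto (fun u : ℝ => u^1 * Real.exp (-u)) atTop (nhds 0) :=
      tendsto_pow_mul_exp_neg_atTop_nhds_zero 1
    have h3 := ((h2.comp h1).const_mul (2 * N (1/4)))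
    rw [mul_zero] at h3
    have h4 : Tendsto (fun m : ℝ => m * Real.exp (-(m/2)) * N (1/4)) atTop (nhds 0) := by
      apply h3.congr
      intro m
      simp only [Function.comp_apply, pow_one]
      ring
    exact h4.eventually_lt_const hc₁0
  have evE3 : ∀ᶠ m : ℝ in atTop, N (K/(2*m)) ≤ 2 * N (1/m) ∧ 0 < m := by
    have hl : (0:ℝ) < 2/K := by positivity
    have h1 := (hslow (2/K) hl).eventually_lt_const (show (1:ℝ) < 2 by norm_num)
    filter_upwards [h1, evN1, eventually_gt_atTop 0] with m hm hN1 hm0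
    refine ⟨?_, hm0⟩
    have hrw : 1/(2/K*m) = K/(2*m) := by
      field_simp
    rw [hrw] at hm
    have hpos : 0 < N (1/m) := by linarith
    calc N (K/(2*m)) = N (K/(2*m)) / N (1/m) * N (1/m) := by field_simp
      _ ≤ 2 * N (1/m) := by
          apply mul_le_mul_of_nonneg_right (le_of_lt hm) (by linarith)
  have evE4 : ∀ᶠ m : ℝ in atTop, N (κ/(2*m)) - N (2*K/m) ≤ η * N (1/m) := by
    have hl4 : (0:ℝ) < 2/κ := by positivity
    have hl3 : (0:ℝ) < 1/(2*K) := by positivity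
    have h1 : Tendsto (fun m : ℝ => N (1/(2/κ*m)) / N (1/m) - N (1/(1/(2*K)*m)) / N (1/m))
        atTop (nhds 0) := by
      have := (hslow (2/κ) hl4).sub (hslow (1/(2*K)) hl3)
      rwa [sub_self] at this
    filter_upwards [h1.eventually_lt_const hη0, evN1, eventually_gt_atTop 0]
      with m hm hN1 hm0
    have hrw4 : 1/(2/κ*m) = κ/(2*m) := by field_simp
    have hrw3 : 1/(1/(2*K)*m) = 2*K/m := by field_simp
    rw [hrw4, hrw3] at hm
    have hpos : 0 < N (1/m) := by linarith
    have := mul_le_mul_of_nonneg_right (le_of_lt hm) (le_of_lt hpos)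
    calc N (κ/(2*m)) - N (2*K/m)
        = (N (κ/(2*m)) / N (1/m) - N (2*K/m) / N (1/m)) * N (1/m) := by
          field_simp
      _ ≤ η * N (1/m) := this
  -- main part
  filter_upwards [evm, evN1, evE2, evE3, evE4] with m hmm hN1 hE2 hE3' hE4
  obtain ⟨hm2, hm4K⟩ := hmm
  obtain ⟨hE3, _⟩ := hE3'
  have hm0 : (0:ℝ) < m := by linarith
  set X := m * ∫ x in Set.Ioc (0:ℝ) 1, Real.exp (-(m * x)) * N x with hXdef
  set Y := m * ∫ x in Set.Ioc (0:ℝ) 1, (1 - x) ^ (m - 1) * N x with hYdef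
  -- memberships
  have hmem14 : (1/4 : ℝ) ∈ Set.Ioc (0:ℝ) 1 := by norm_num
  have hmem1m : (1/m : ℝ) ∈ Set.Ioc (0:ℝ) 1 :=
    ⟨by positivity, by rw [div_le_one hm0]; linarith⟩
  have hmemK2m : K/(2*m) ∈ Set.Ioc (0:ℝ) 1 :=
    ⟨by positivity, by rw [div_le_one (by positivity)]; nlinarith⟩
  have hmem2Km : 2*K/m ∈ Set.Ioc (0:ℝ) 1 :=
    ⟨by positivity, by rw [div_le_one hm0]; linarith⟩
  have hmemκ2m : κ/(2*m) ∈ Set.Ioc (0:ℝ) 1 :=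
    ⟨by positivity, by rw [div_le_one (by positivity)]; nlinarith⟩
  have hT43 : N (2*K/m) ≤ N (κ/(2*m)) := by
    apply hanti hmemκ2m hmem2Km
    rw [div_le_div_iff₀ (by positivity) hm0]
    nlinarith
  -- basic facts about X, Y
  have hXlb : (1 - Real.exp (-1)) * N (1/m) ≤ X := aux_phi_lb hmeas hnonneg hanti hint hm2
  have hX0 : 0 < X := by nlinarith
  have hY0 : 0 ≤ Y := by
    apply mul_nonneg (le_of_lt hm0)
    apply setIntegral_nonneg measurableSet_Ioc
    intro x hx
    exact mul_nonneg (Real.rpow_nonneg (by linarith [hx.2]) _) (hnonneg x hx)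
  have hoX := aux_oX hmeas hnonneg hanti hint hm2
  have hoY := aux_oY hmeas hnonneg hanti hint hm2
  have hXY : X ≤ Y := by
    apply (ENNReal.ofReal_le_ofReal_iff hY0).1
    rw [hoX, hoY]
    apply lintegral_mono
    intro t
    apply ENNReal.ofReal_le_ofReal
    have := aux_Fnn (aN_mem N t).1 (aN_mem N t).2 (by linarith : (0:ℝ) ≤ m)
    linarith
  -- measurability of the t-side function
  have haM : Measurable (aN N) := (aN_antitone N).measurable
  have hg1meas : Measurable (fun t => ENNReal.ofReal (1 - Real.exp (-(m * aN N t)))) := by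
    apply Measurable.ennreal_ofReal
    exact ((haM.const_mul m).neg.exp).const_sub 1
  -- the main estimate
  set D := Real.exp (-(m/2)) * N (1/4) + 2*K^2*Real.exp (-K)/m * N (K/(2*m))
    + 2*K^2/m * (N (κ/(2*m)) - N (2*K/m)) + 2*κ/m * X with hDdef
  have hD0 : 0 ≤ D := by
    have h1 : 0 ≤ N (1/4) := hnonneg _ hmem14
    have h2 : 0 ≤ N (K/(2*m)) := hnonneg _ hmemK2m
    have h4 : 0 ≤ X := le_of_lt hX0
    have e1 : (0:ℝ) ≤ Real.exp (-(m/2)) := Real.exp_nonneg _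
    have e2 : (0:ℝ) ≤ 2*K^2*Real.exp (-K)/m := by positivity
    have e3 : (0:ℝ) ≤ 2*K^2/m := by positivity
    have e4 : (0:ℝ) ≤ 2*κ/m := by positivity
    rw [hDdef]
    have := sub_nonneg.2 hT43
    positivity
  have hmain : Y ≤ X + D := by
    have hi1meas : Measurable ((Set.Iic (N (1/4))).indicator
        (fun _ : ℝ => ENNReal.ofReal (Real.exp (-(m/2))))) :=
      measurable_const.indicator measurableSet_Iic
    have hi2meas : Measurable ((Set.Iic (N (K/(2*m)))).indicator
        (fun _ : ℝ => ENNReal.ofReal (2*K^2*Real.exp (-K)/m))) :=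
      measurable_const.indicator measurableSet_Iic
    have hi3meas : Measurable ((Set.Icc (N (2*K/m)) (N (κ/(2*m)))).indicator
        (fun _ : ℝ => ENNReal.ofReal (2*K^2/m))) :=
      measurable_const.indicator measurableSet_Icc
    have hptw := fun (t : ℝ) (ht : t ∈ Set.Ioi (0:ℝ)) =>
      aux_pointwise hnonneg hanti hm2 hK2 hm4K hκ0 hκ1 ht
    have hp1 : (∫⁻ t in Set.Ioi (0:ℝ), (Set.Iic (N (1/4))).indicator
        (fun _ => ENNReal.ofReal (Real.exp (-(m/2)))) t)
        = ENNReal.ofReal (Real.exp (-(m/2)) * N (1/4)) := by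
      rw [lintegral_indicator measurableSet_Iic, setLIntegral_const,
        Measure.restrict_apply measurableSet_Iic, Set.inter_comm, Set.Ioi_inter_Iic,
        Real.volume_Ioc, sub_zero, ← ENNReal.ofReal_mul (Real.exp_nonneg _)]
    have hp2 : (∫⁻ t in Set.Ioi (0:ℝ), (Set.Iic (N (K/(2*m)))).indicator
        (fun _ => ENNReal.ofReal (2*K^2*Real.exp (-K)/m)) t)
        = ENNReal.ofReal (2*K^2*Real.exp (-K)/m * N (K/(2*m))) := by
      rw [lintegral_indicator measurableSet_Iic, setLIntegral_const,
        Measure.restrict_apply measurableSet_Iic, Set.inter_comm, Set.Ioi_inter_Iic,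
        Real.volume_Ioc, sub_zero, ← ENNReal.ofReal_mul (by positivity)]
    have hp3 : (∫⁻ t in Set.Ioi (0:ℝ), (Set.Icc (N (2*K/m)) (N (κ/(2*m)))).indicator
        (fun _ => ENNReal.ofReal (2*K^2/m)) t)
        ≤ ENNReal.ofReal (2*K^2/m * (N (κ/(2*m)) - N (2*K/m))) := by
      rw [lintegral_indicator measurableSet_Icc, setLIntegral_const,
        Measure.restrict_apply measurableSet_Icc]
      calc ENNReal.ofReal (2*K^2/m) * volume (Set.Icc (N (2*K/m)) (N (κ/(2*m))) ∩ Set.Ioi 0)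
          ≤ ENNReal.ofReal (2*K^2/m) * volume (Set.Icc (N (2*K/m)) (N (κ/(2*m)))) :=
            mul_le_mul_right (measure_mono Set.inter_subset_left) _
        _ = ENNReal.ofReal (2*K^2/m) * ENNReal.ofReal (N (κ/(2*m)) - N (2*K/m)) := by
            rw [Real.volume_Icc]
        _ = ENNReal.ofReal (2*K^2/m * (N (κ/(2*m)) - N (2*K/m))) :=
            (ENNReal.ofReal_mul (by positivity)).symm
    have hstep : ENNReal.ofReal Y ≤ ENNReal.ofReal X + ENNReal.ofReal D := by
      rw [hoY]
      refine le_trans (setLIntegral_mono ?_ hptw) ?_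
      · exact hg1meas.add ((((hi1meas.add hi2meas).add hi3meas)).add (hg1meas.const_mul _))
      · rw [lintegral_add_left hg1meas,
          lintegral_add_left ((hi1meas.fun_add hi2meas).fun_add hi3meas),
          lintegral_add_left (hi1meas.fun_add hi2meas),
          lintegral_add_left hi1meas,
          lintegral_const_mul' _ _ ENNReal.ofReal_ne_top, ← hoX, hp1, hp2]
        apply add_le_add_right
        have hlast : ENNReal.ofReal (2*κ/m) * ENNReal.ofReal X
            = ENNReal.ofReal (2*κ/m * X) := (ENNReal.ofReal_mul (by positivity)).symm
        rw [hlast]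
        have hfin : ENNReal.ofReal (Real.exp (-(m/2)) * N (1/4))
            + ENNReal.ofReal (2*K^2*Real.exp (-K)/m * N (K/(2*m)))
            + ENNReal.ofReal (2*K^2/m * (N (κ/(2*m)) - N (2*K/m)))
            + ENNReal.ofReal (2*κ/m * X) = ENNReal.ofReal D := by
          have n1 : (0:ℝ) ≤ Real.exp (-(m/2)) * N (1/4) :=
            mul_nonneg (Real.exp_nonneg _) (hnonneg _ hmem14)
          have n2 : (0:ℝ) ≤ 2*K^2*Real.exp (-K)/m * N (K/(2*m)) :=
            mul_nonneg (by positivity) (hnonneg _ hmemK2m)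
          have n3 : (0:ℝ) ≤ 2*K^2/m * (N (κ/(2*m)) - N (2*K/m)) :=
            mul_nonneg (by positivity) (by linarith)
          have n4 : (0:ℝ) ≤ 2*κ/m * X := mul_nonneg (by positivity) (le_of_lt hX0)
          rw [hDdef, ENNReal.ofReal_add (by positivity) n4,
            ENNReal.ofReal_add (by positivity) n3, ENNReal.ofReal_add n1 n2]
        rw [← hfin]
        exact add_le_add_left (add_le_add_right hp3 _) _
    have := (ENNReal.ofReal_le_ofReal_iff (by linarith)).1
      (le_trans hstep (le_of_eq (ENNReal.ofReal_add (le_of_lt hX0) hD0).symm))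
    exact this
  -- final numeric estimate
  have hDbound : m * D ≤ ε' * X := by
    have t1 : m * (Real.exp (-(m/2)) * N (1/4)) ≤ ε'/4 * X := by
      have h1 : m * (Real.exp (-(m/2)) * N (1/4)) < c₁ := by
        have := hE2; nlinarith [Real.exp_nonneg (-(m/2))]
      have h2 : c₁ ≤ c₁ * N (1/m) := by nlinarith
      have h3 : c₁ * N (1/m) ≤ ε'/4 * X := by
        rw [hc₁def]
        calc ε'/4 * (1 - Real.exp (-1)) * N (1/m)
            = ε'/4 * ((1 - Real.exp (-1)) * N (1/m)) := by ring
          _ ≤ ε'/4 * X := by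
              apply mul_le_mul_of_nonneg_left hXlb (by positivity)
      linarith
    have t2 : m * (2*K^2*Real.exp (-K)/m * N (K/(2*m))) ≤ ε'/4 * X := by
      have hNK : 0 ≤ N (K/(2*m)) := hnonneg _ hmemK2m
      have h1 : m * (2*K^2*Real.exp (-K)/m * N (K/(2*m)))
          = 2*K^2*Real.exp (-K) * N (K/(2*m)) := by field_simp
      have h2 : 2*K^2*Real.exp (-K) * N (K/(2*m)) ≤ 2*K^2*Real.exp (-K) * (2 * N (1/m)) := by
        apply mul_le_mul_of_nonneg_left hE3 (by positivity)
      have h3 : 2*K^2*Real.exp (-K) * (2 * N (1/m)) = 4*K^2*Real.exp (-K) * N (1/m) := by ring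
      have h4 : 4*K^2*Real.exp (-K) * N (1/m) ≤ c₁ * N (1/m) := by nlinarith
      have h5 : c₁ * N (1/m) ≤ ε'/4 * X := by
        rw [hc₁def]
        calc ε'/4 * (1 - Real.exp (-1)) * N (1/m)
            = ε'/4 * ((1 - Real.exp (-1)) * N (1/m)) := by ring
          _ ≤ ε'/4 * X := by
              apply mul_le_mul_of_nonneg_left hXlb (by positivity)
      linarith
    have t3 : m * (2*K^2/m * (N (κ/(2*m)) - N (2*K/m))) ≤ ε'/4 * X := by
      have h1 : m * (2*K^2/m * (N (κ/(2*m)) - N (2*K/m)))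
          = 2*K^2 * (N (κ/(2*m)) - N (2*K/m)) := by field_simp
      have h2 : 2*K^2 * (N (κ/(2*m)) - N (2*K/m)) ≤ 2*K^2 * (η * N (1/m)) := by
        apply mul_le_mul_of_nonneg_left hE4 (by positivity)
      have h3 : 2*K^2 * (η * N (1/m)) = c₁ * N (1/m) := by
        rw [hηdef]; field_simp
      have h5 : c₁ * N (1/m) ≤ ε'/4 * X := by
        rw [hc₁def]
        calc ε'/4 * (1 - Real.exp (-1)) * N (1/m)
            = ε'/4 * ((1 - Real.exp (-1)) * N (1/m)) := by ring
          _ ≤ ε'/4 * X := by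
              apply mul_le_mul_of_nonneg_left hXlb (by positivity)
      linarith
    have t4 : m * (2*κ/m * X) ≤ ε'/4 * X := by
      have h1 : m * (2*κ/m * X) = 2*κ*X := by field_simp
      have h2 : 2*κ*X ≤ 2*(ε'/8)*X := by nlinarith
      nlinarith
    have hexp : m * D = m * (Real.exp (-(m/2)) * N (1/4))
        + m * (2*K^2*Real.exp (-K)/m * N (K/(2*m)))
        + m * (2*K^2/m * (N (κ/(2*m)) - N (2*K/m))) + m * (2*κ/m * X) := by
      rw [hDdef]; ring
    calc m * D = m * (Real.exp (-(m/2)) * N (1/4))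
        + m * (2*K^2*Real.exp (-K)/m * N (K/(2*m)))
        + m * (2*K^2/m * (N (κ/(2*m)) - N (2*K/m))) + m * (2*κ/m * X) := hexp
      _ ≤ ε'/4*X + ε'/4*X + ε'/4*X + ε'/4*X :=
          add_le_add (add_le_add (add_le_add t1 t2) t3) t4
      _ = ε' * X := by ring
  -- conclude
  have hgoal : ((X - Y) / (X/m)) = (X - Y) * m / X := div_div_eq_mul_div _ _ _
  rw [Real.norm_eq_abs, hgoal, abs_div, abs_of_pos hX0, abs_mul,
    abs_of_nonpos (sub_nonpos.2 hXY), abs_of_pos hm0]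
  rw [div_lt_iff₀ hX0]
  have : -(X - Y) * m ≤ ε' * X := by
    have h1 : -(X - Y) ≤ D := by linarith
    have h2 : -(X - Y) * m ≤ D * m := by
      apply mul_le_mul_of_nonneg_right h1 (le_of_lt hm0)
    nlinarith
  have hεX : ε' * X < ε * X := by
    apply mul_lt_mul_of_pos_right _ hX0
    rw [hε'def]; linarith
  linarith
end
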